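/- arXiv:2011.06127 — 5 statements merged into one kernel-verified Lean document; each statement's English description precedes it below -/
import Mathlib

section
/- Under the permutation null distribution, the variance of α equals {2A·f₁(m) + 4B·f₂(m) + C·f₃(m)}/(m²(m−1)²) − k̄², where f₁(x) = x(x−1)/(N(N−1)), f₂(x) = x(x−1)(x−2)/(N(N−1)(N−2)), f₃(x) = x(x−1)(x−2)(x−3)/(N(N−1)(N−2)(N−3)), A = Σ_{i≠j} k_{ij}², B = Σ over triples of pairwise distinct indices (i,j,u) of k_{ij}k_{iu}, and C = Σ over quadruples of pairwise distinct indices (i,j,u,v) of k_{ij}k_{uv}. -/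
open Finset Matrix Asymptotics

/-- Expectation under the permutation null distribution: uniform over all
`N.choose m` subsets `S ⊆ {1,…,N}` of size `m`. -/
noncomputable def pexp (N m : ℕ) (f : Finset (Fin N) → ℝ) : ℝ :=
  (∑ S ∈ Finset.powersetCard m (Finset.univ : Finset (Fin N)), f S) / (N.choose m)

/-- Variance under the permutation null distribution. -/
noncomputable def pvar (N m : ℕ) (f : Finset (Fin N) → ℝ) : ℝ :=
  pexp N m (fun S => (f S - pexp N m f) ^ 2)

/-- Covariance under the permutation null distribution. -/
noncomputable def pcov (N m : ℕ) (f g : Finset (Fin N) → ℝ) : ℝ :=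
  pexp N m (fun S => (f S - pexp N m f) * (g S - pexp N m g))

/-- `α(S) = (m(m−1))⁻¹ Σ_{i,j∈S, i≠j} k_{ij}`. -/
noncomputable def alphaStat (N m : ℕ) (k : Fin N → Fin N → ℝ) (S : Finset (Fin N)) : ℝ :=
  ((m : ℝ) * ((m : ℝ) - 1))⁻¹ * ∑ i ∈ S, ∑ j ∈ S.erase i, k i j

/-- `β(S) = (n(n−1))⁻¹ Σ_{i,j∉S, i≠j} k_{ij}`. -/
noncomputable def betaStat (N n : ℕ) (k : Fin N → Fin N → ℝ) (S : Finset (Fin N)) : ℝ :=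
  ((n : ℝ) * ((n : ℝ) - 1))⁻¹ * ∑ i ∈ Sᶜ, ∑ j ∈ Sᶜ.erase i, k i j

/-- `γ(S) = (mn)⁻¹ Σ_{i∈S, j∉S} k_{ij}`. -/
noncomputable def gammaStat (N m n : ℕ) (k : Fin N → Fin N → ℝ) (S : Finset (Fin N)) : ℝ :=
  ((m : ℝ) * (n : ℝ))⁻¹ * ∑ i ∈ S, ∑ j ∈ Sᶜ, k i j

/-- `k̄ = (N(N−1))⁻¹ Σ_{i≠j} k_{ij}`. -/
noncomputable def kbar (N : ℕ) (k : Fin N → Fin N → ℝ) : ℝ :=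
  ((N : ℝ) * ((N : ℝ) - 1))⁻¹ *
    ∑ i : Fin N, ∑ j ∈ (Finset.univ : Finset (Fin N)).erase i, k i j

/-- `A = Σ_{i≠j} k_{ij}²`. -/
noncomputable def kA (N : ℕ) (k : Fin N → Fin N → ℝ) : ℝ :=
  ∑ i : Fin N, ∑ j ∈ (Finset.univ : Finset (Fin N)).erase i, (k i j) ^ 2

/-- `B = Σ_{(i,j,u) pairwise distinct} k_{ij} k_{iu}`. -/
noncomputable def kB (N : ℕ) (k : Fin N → Fin N → ℝ) : ℝ :=
  ∑ i : Fin N, ∑ j ∈ (Finset.univ : Finset (Fin N)).erase i,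
    ∑ u ∈ ((Finset.univ : Finset (Fin N)).erase i).erase j, k i j * k i u

/-- `C = Σ_{(i,j,u,v) pairwise distinct} k_{ij} k_{uv}`. -/
noncomputable def kC (N : ℕ) (k : Fin N → Fin N → ℝ) : ℝ :=
  ∑ i : Fin N, ∑ j ∈ (Finset.univ : Finset (Fin N)).erase i,
    ∑ u ∈ ((Finset.univ : Finset (Fin N)).erase i).erase j,
      ∑ v ∈ (((Finset.univ : Finset (Fin N)).erase i).erase j).erase u, k i j * k u v

/-- `W(S) = mα(S)/N + nβ(S)/N`. -/
noncomputable def Wstat (N m n : ℕ) (k : Fin N → Fin N → ℝ) (S : Finset (Fin N)) : ℝ :=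
  (m : ℝ) * alphaStat N m k S / (N : ℝ) + (n : ℝ) * betaStat N n k S / (N : ℝ)

/-- `D(S) = m(m−1)α(S) − n(n−1)β(S)`. -/
noncomputable def Dstat (N m n : ℕ) (k : Fin N → Fin N → ℝ) (S : Finset (Fin N)) : ℝ :=
  (m : ℝ) * ((m : ℝ) - 1) * alphaStat N m k S - (n : ℝ) * ((n : ℝ) - 1) * betaStat N n k S

/-- Centered row sums `k̃_{i·} = Σ_{j≠i} (k_{ij} − k̄)`. -/
noncomputable def krow (N : ℕ) (k : Fin N → Fin N → ℝ) (i : Fin N) : ℝ :=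
  ∑ j ∈ (Finset.univ : Finset (Fin N)).erase i, (k i j - kbar N k)

/-- Weighted version `W_r(S) = r·mα(S)/N + nβ(S)/N`. -/
noncomputable def Wrstat (N m n : ℕ) (r : ℝ) (k : Fin N → Fin N → ℝ) (S : Finset (Fin N)) : ℝ :=
  r * ((m : ℝ) * alphaStat N m k S) / (N : ℝ) + (n : ℝ) * betaStat N n k S / (N : ℝ)


lemma count_superset {α : Type*} [DecidableEq α] [Fintype α] (m : ℕ) (T : Finset α)
    (hT : T.card ≤ m) :
    ((powersetCard m (univ : Finset α)).filter (fun S => T ⊆ S)).card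
      = (Fintype.card α - T.card).choose (m - T.card) := by
  rw [← Finset.card_compl T, ← Finset.card_powersetCard]
  apply Finset.card_bij (fun S _ => S \ T)
  · intro S hS
    simp only [Finset.mem_filter, Finset.mem_powersetCard] at hS
    obtain ⟨⟨-, hcard⟩, hsub⟩ := hS
    rw [Finset.mem_powersetCard]
    constructor
    · intro x hx
      simp only [Finset.mem_sdiff] at hx
      simp [hx.2]
    · rw [Finset.card_sdiff_of_subset hsub, hcard]
  · intro S₁ h₁ S₂ h₂ h
    simp only [Finset.mem_filter, Finset.mem_powersetCard] at h₁ h₂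
    rw [← Finset.sdiff_union_of_subset h₁.2, ← Finset.sdiff_union_of_subset h₂.2, h]
  · intro U hU
    rw [Finset.mem_powersetCard] at hU
    obtain ⟨hUsub, hUcard⟩ := hU
    have hdisj : Disjoint U T := by
      rw [Finset.disjoint_right]
      intro x hxT hxU
      have := hUsub hxU
      simp at this
      exact this hxT
    refine ⟨U ∪ T, ?_, ?_⟩
    · simp only [Finset.mem_filter, Finset.mem_powersetCard]
      refine ⟨⟨Finset.subset_univ _, ?_⟩, Finset.subset_union_right⟩
      rw [Finset.card_union_of_disjoint hdisj, hUcard]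
      omega
    · rw [Finset.union_sdiff_right, Finset.sdiff_eq_self_of_disjoint hdisj]

lemma count_superset_zero {α : Type*} [DecidableEq α] [Fintype α] (m : ℕ) (T : Finset α)
    (hT : m < T.card) :
    ((powersetCard m (univ : Finset α)).filter (fun S => T ⊆ S)).card = 0 := by
  rw [Finset.card_eq_zero, Finset.filter_eq_empty_iff]
  intro S hS hsub
  rw [Finset.mem_powersetCard] at hS
  have := Finset.card_le_card hsub
  omega

lemma push_ite {p : Prop} [Decidable p] {β : Type*} (s : Finset β) (f : β → ℝ)
    (q : β → Prop) [DecidablePred q] :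
    (if p then ∑ x ∈ s, (if q x then f x else 0) else 0)
      = ∑ x ∈ s, if p ∧ q x then f x else 0 := by
  split_ifs with h
  · exact Finset.sum_congr rfl fun x _ => by simp [h]
  · exact (Finset.sum_eq_zero fun x _ => by simp [h]).symm

variable {α : Type*} [Fintype α] [DecidableEq α]

lemma inter1 (S : Finset α) : (univ : Finset α) ∩ S = S := Finset.univ_inter S

lemma inter2 (S : Finset α) (i : α) : (univ.erase i) ∩ S = S.erase i := by
  ext x; simp [and_comm]

lemma inter3 (S : Finset α) (i j : α) :
    ((univ.erase i).erase j) ∩ S = (S.erase i).erase j := by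
  ext x
  simp only [Finset.mem_inter, Finset.mem_erase, Finset.mem_univ, and_true, true_and]
  tauto

lemma inter4 (S : Finset α) (i j u : α) :
    (((univ.erase i).erase j).erase u) ∩ S = ((S.erase i).erase j).erase u := by
  ext x
  simp only [Finset.mem_inter, Finset.mem_erase, Finset.mem_univ, and_true, true_and]
  tauto

lemma key2 (g : α → α → ℝ) (S : Finset α) :
    ∑ i ∈ S, ∑ j ∈ S.erase i, g i j
      = ∑ i : α, ∑ j ∈ univ.erase i, if i ∈ S ∧ j ∈ S then g i j else 0 := by
  have : ∀ i : α, (∑ j ∈ univ.erase i, if i ∈ S ∧ j ∈ S then g i j else 0)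
      = if i ∈ S then ∑ j ∈ (univ.erase i) ∩ S, g i j else 0 := by
    intro i
    rw [← Finset.sum_ite_mem, push_ite]
  rw [Finset.sum_congr rfl (fun i _ => this i), Finset.sum_ite_mem, inter1]
  exact Finset.sum_congr rfl fun i _ => by rw [inter2]

lemma key3 (g : α → α → α → ℝ) (S : Finset α) :
    ∑ i ∈ S, ∑ j ∈ S.erase i, ∑ u ∈ (S.erase i).erase j, g i j u
      = ∑ i : α, ∑ j ∈ univ.erase i, ∑ u ∈ (univ.erase i).erase j,
          if (i ∈ S ∧ j ∈ S) ∧ u ∈ S then g i j u else 0 := by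
  have h1 : ∀ (i j : α), (∑ u ∈ (univ.erase i).erase j, if (i ∈ S ∧ j ∈ S) ∧ u ∈ S then g i j u else 0)
      = if i ∈ S ∧ j ∈ S then ∑ u ∈ (S.erase i).erase j, g i j u else 0 := by
    intro i j
    rw [← inter3 S i j, ← Finset.sum_ite_mem, push_ite]
  have h2 : ∀ i : α, (∑ j ∈ univ.erase i, if i ∈ S ∧ j ∈ S then (∑ u ∈ (S.erase i).erase j, g i j u) else 0)
      = if i ∈ S then ∑ j ∈ (univ.erase i) ∩ S, ∑ u ∈ (S.erase i).erase j, g i j u else 0 := by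
    intro i
    rw [← Finset.sum_ite_mem, push_ite]
  calc ∑ i ∈ S, ∑ j ∈ S.erase i, ∑ u ∈ (S.erase i).erase j, g i j u
      = ∑ i ∈ univ ∩ S, ∑ j ∈ (univ.erase i) ∩ S, ∑ u ∈ (S.erase i).erase j, g i j u := by
        rw [inter1]; exact Finset.sum_congr rfl fun i _ => by rw [inter2]
    _ = ∑ i : α, ∑ j ∈ univ.erase i, ∑ u ∈ (univ.erase i).erase j,
          if (i ∈ S ∧ j ∈ S) ∧ u ∈ S then g i j u else 0 := by
        rw [← Finset.sum_ite_mem]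
        refine Finset.sum_congr rfl fun i _ => ?_
        rw [← h2 i]
        exact Finset.sum_congr rfl fun j _ => (h1 i j).symm

lemma key4 (g : α → α → α → α → ℝ) (S : Finset α) :
    ∑ i ∈ S, ∑ j ∈ S.erase i, ∑ u ∈ (S.erase i).erase j, ∑ v ∈ ((S.erase i).erase j).erase u, g i j u v
      = ∑ i : α, ∑ j ∈ univ.erase i, ∑ u ∈ (univ.erase i).erase j, ∑ v ∈ ((univ.erase i).erase j).erase u,
          if ((i ∈ S ∧ j ∈ S) ∧ u ∈ S) ∧ v ∈ S then g i j u v else 0 := by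
  have h0 : ∀ (i j u : α), (∑ v ∈ ((univ.erase i).erase j).erase u, if ((i ∈ S ∧ j ∈ S) ∧ u ∈ S) ∧ v ∈ S then g i j u v else 0)
      = if (i ∈ S ∧ j ∈ S) ∧ u ∈ S then ∑ v ∈ ((S.erase i).erase j).erase u, g i j u v else 0 := by
    intro i j u
    rw [← inter4 S i j u, ← Finset.sum_ite_mem, push_ite]
  have h1 : ∀ (i j : α), (∑ u ∈ (univ.erase i).erase j,
        if (i ∈ S ∧ j ∈ S) ∧ u ∈ S then (∑ v ∈ ((S.erase i).erase j).erase u, g i j u v) else 0)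
      = if i ∈ S ∧ j ∈ S then ∑ u ∈ (S.erase i).erase j, ∑ v ∈ ((S.erase i).erase j).erase u, g i j u v else 0 := by
    intro i j
    rw [← inter3 S i j, ← Finset.sum_ite_mem, push_ite]
  have h2 : ∀ i : α, (∑ j ∈ univ.erase i,
        if i ∈ S ∧ j ∈ S then (∑ u ∈ (S.erase i).erase j, ∑ v ∈ ((S.erase i).erase j).erase u, g i j u v) else 0)
      = if i ∈ S then ∑ j ∈ (univ.erase i) ∩ S, ∑ u ∈ (S.erase i).erase j, ∑ v ∈ ((S.erase i).erase j).erase u, g i j u v else 0 := by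
    intro i
    rw [← Finset.sum_ite_mem, push_ite]
  calc ∑ i ∈ S, ∑ j ∈ S.erase i, ∑ u ∈ (S.erase i).erase j, ∑ v ∈ ((S.erase i).erase j).erase u, g i j u v
      = ∑ i ∈ univ ∩ S, ∑ j ∈ (univ.erase i) ∩ S, ∑ u ∈ (S.erase i).erase j, ∑ v ∈ ((S.erase i).erase j).erase u, g i j u v := by
        rw [inter1]; exact Finset.sum_congr rfl fun i _ => by rw [inter2]
    _ = _ := by
        rw [← Finset.sum_ite_mem]
        refine Finset.sum_congr rfl fun i _ => ?_
        rw [← h2 i]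
        refine Finset.sum_congr rfl fun j _ => ?_
        rw [← h1 i j]
        exact Finset.sum_congr rfl fun u _ => (h0 i j u).symm

lemma sum_ite_count (m : ℕ) (T : Finset α) (x : ℝ) :
    ∑ S ∈ powersetCard m (univ : Finset α), (if T ⊆ S then x else 0)
      = (((powersetCard m (univ : Finset α)).filter (fun S => T ⊆ S)).card : ℝ) * x := by
  rw [← Finset.sum_filter, Finset.sum_const, nsmul_eq_mul]

lemma sum2 (m : ℕ) (hm : 2 ≤ m) (g : α → α → ℝ) :
    ∑ S ∈ powersetCard m (univ : Finset α), ∑ i ∈ S, ∑ j ∈ S.erase i, g i j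
      = ((Fintype.card α - 2).choose (m - 2) : ℝ) * ∑ i : α, ∑ j ∈ univ.erase i, g i j := by
  rw [Finset.sum_congr rfl (fun S _ => key2 g S), Finset.sum_comm, Finset.mul_sum]
  refine Finset.sum_congr rfl fun i _ => ?_
  rw [Finset.sum_comm, Finset.mul_sum]
  refine Finset.sum_congr rfl fun j hj => ?_
  have hji : j ≠ i := (Finset.mem_erase.1 hj).1
  have hcond : ∀ S : Finset α, (i ∈ S ∧ j ∈ S) ↔ ({i, j} : Finset α) ⊆ S := by
    intro S; simp [Finset.insert_subset_iff]
  have hcard : ({i, j} : Finset α).card = 2 := by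
    rw [Finset.card_insert_of_notMem (by simp [hji.symm]), Finset.card_singleton]
  rw [Finset.sum_congr rfl (fun S _ => if_congr (hcond S) rfl rfl), sum_ite_count,
    count_superset m _ (by rw [hcard]; omega), hcard]

lemma sum3 (m : ℕ) (hm : 3 ≤ m) (g : α → α → α → ℝ) :
    ∑ S ∈ powersetCard m (univ : Finset α), ∑ i ∈ S, ∑ j ∈ S.erase i,
        ∑ u ∈ (S.erase i).erase j, g i j u
      = ((Fintype.card α - 3).choose (m - 3) : ℝ) *
          ∑ i : α, ∑ j ∈ univ.erase i, ∑ u ∈ (univ.erase i).erase j, g i j u := by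
  rw [Finset.sum_congr rfl (fun S _ => key3 g S), Finset.sum_comm, Finset.mul_sum]
  refine Finset.sum_congr rfl fun i _ => ?_
  rw [Finset.sum_comm, Finset.mul_sum]
  refine Finset.sum_congr rfl fun j hj => ?_
  rw [Finset.sum_comm, Finset.mul_sum]
  refine Finset.sum_congr rfl fun u hu => ?_
  have hji : j ≠ i := (Finset.mem_erase.1 hj).1
  have huj : u ≠ j := (Finset.mem_erase.1 hu).1
  have hui : u ≠ i := (Finset.mem_erase.1 (Finset.mem_erase.1 hu).2).1
  have hcond : ∀ S : Finset α, ((i ∈ S ∧ j ∈ S) ∧ u ∈ S) ↔ ({i, j, u} : Finset α) ⊆ S := by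
    intro S; simp [Finset.insert_subset_iff]; tauto
  have hcard : ({i, j, u} : Finset α).card = 3 := by
    rw [Finset.card_insert_of_notMem (by simp [hji.symm, hui.symm]),
      Finset.card_insert_of_notMem (by simp [huj.symm]), Finset.card_singleton]
  rw [Finset.sum_congr rfl (fun S _ => if_congr (hcond S) rfl rfl), sum_ite_count,
    count_superset m _ (by rw [hcard]; omega), hcard]

lemma sum4 (m : ℕ) (hm : 4 ≤ m) (g : α → α → α → α → ℝ) :
    ∑ S ∈ powersetCard m (univ : Finset α), ∑ i ∈ S, ∑ j ∈ S.erase i,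
        ∑ u ∈ (S.erase i).erase j, ∑ v ∈ ((S.erase i).erase j).erase u, g i j u v
      = ((Fintype.card α - 4).choose (m - 4) : ℝ) *
          ∑ i : α, ∑ j ∈ univ.erase i, ∑ u ∈ (univ.erase i).erase j,
            ∑ v ∈ ((univ.erase i).erase j).erase u, g i j u v := by
  rw [Finset.sum_congr rfl (fun S _ => key4 g S), Finset.sum_comm, Finset.mul_sum]
  refine Finset.sum_congr rfl fun i _ => ?_
  rw [Finset.sum_comm, Finset.mul_sum]
  refine Finset.sum_congr rfl fun j hj => ?_
  rw [Finset.sum_comm, Finset.mul_sum]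
  refine Finset.sum_congr rfl fun u hu => ?_
  rw [Finset.sum_comm, Finset.mul_sum]
  refine Finset.sum_congr rfl fun v hv => ?_
  have hji : j ≠ i := (Finset.mem_erase.1 hj).1
  have huj : u ≠ j := (Finset.mem_erase.1 hu).1
  have hui : u ≠ i := (Finset.mem_erase.1 (Finset.mem_erase.1 hu).2).1
  have hvu : v ≠ u := (Finset.mem_erase.1 hv).1
  have hvj : v ≠ j := (Finset.mem_erase.1 (Finset.mem_erase.1 hv).2).1
  have hvi : v ≠ i := (Finset.mem_erase.1 (Finset.mem_erase.1 (Finset.mem_erase.1 hv).2).2).1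
  have hcond : ∀ S : Finset α, (((i ∈ S ∧ j ∈ S) ∧ u ∈ S) ∧ v ∈ S) ↔ ({i, j, u, v} : Finset α) ⊆ S := by
    intro S; simp [Finset.insert_subset_iff]; tauto
  have hcard : ({i, j, u, v} : Finset α).card = 4 := by
    rw [Finset.card_insert_of_notMem (by simp [hji.symm, hui.symm, hvi.symm]),
      Finset.card_insert_of_notMem (by simp [huj.symm, hvj.symm]),
      Finset.card_insert_of_notMem (by simp [hvu.symm]), Finset.card_singleton]
  rw [Finset.sum_congr rfl (fun S _ => if_congr (hcond S) rfl rfl), sum_ite_count,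
    count_superset m _ (by rw [hcard]; omega), hcard]

lemma sum3_vanish {S : Finset α} (hS : S.card ≤ 2) (g : α → α → α → ℝ) :
    ∑ i ∈ S, ∑ j ∈ S.erase i, ∑ u ∈ (S.erase i).erase j, g i j u = 0 := by
  refine Finset.sum_eq_zero fun i hi => Finset.sum_eq_zero fun j hj => Finset.sum_eq_zero fun u hu => ?_
  exfalso
  have h1 := Finset.card_erase_of_mem hi
  have h2 := Finset.card_erase_of_mem hj
  have h3 := Finset.card_pos.mpr ⟨u, hu⟩
  omega

lemma sum4_vanish {S : Finset α} (hS : S.card ≤ 3) (g : α → α → α → α → ℝ) :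
    ∑ i ∈ S, ∑ j ∈ S.erase i, ∑ u ∈ (S.erase i).erase j,
      ∑ v ∈ ((S.erase i).erase j).erase u, g i j u v = 0 := by
  refine Finset.sum_eq_zero fun i hi => Finset.sum_eq_zero fun j hj =>
    Finset.sum_eq_zero fun u hu => Finset.sum_eq_zero fun v hv => ?_
  exfalso
  have h1 := Finset.card_erase_of_mem hi
  have h2 := Finset.card_erase_of_mem hj
  have h3 := Finset.card_erase_of_mem hu
  have h4 := Finset.card_pos.mpr ⟨v, hv⟩
  omega

lemma choose_id1 (N m : ℕ) (h1 : 1 ≤ m) (h2 : m ≤ N) :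
    N.choose m * m = N * (N - 1).choose (m - 1) := by
  obtain ⟨m', rfl⟩ : ∃ m', m = m' + 1 := ⟨m - 1, by omega⟩
  obtain ⟨N', rfl⟩ : ∃ N', N = N' + 1 := ⟨N - 1, by omega⟩
  simpa using (Nat.add_one_mul_choose_eq N' m').symm

lemma choose_id2 (N m : ℕ) (h1 : 2 ≤ m) (h2 : m ≤ N) :
    N.choose m * (m * (m - 1)) = N * (N - 1) * (N - 2).choose (m - 2) := by
  have a1 := choose_id1 N m (by omega) h2
  have a2 := choose_id1 (N - 1) (m - 1) (by omega) (by omega)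
  have e1 : N - 1 - 1 = N - 2 := by omega
  have e2 : m - 1 - 1 = m - 2 := by omega
  rw [e1, e2] at a2
  calc N.choose m * (m * (m - 1)) = N.choose m * m * (m - 1) := by ring
    _ = N * ((N - 1).choose (m - 1) * (m - 1)) := by rw [a1]; ring
    _ = N * ((N - 1) * (N - 2).choose (m - 2)) := by rw [a2]
    _ = N * (N - 1) * (N - 2).choose (m - 2) := by ring

lemma choose_id3 (N m : ℕ) (h1 : 3 ≤ m) (h2 : m ≤ N) :
    N.choose m * (m * (m - 1) * (m - 2)) = N * (N - 1) * (N - 2) * (N - 3).choose (m - 3) := by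
  have a1 := choose_id2 N m (by omega) h2
  have a2 := choose_id1 (N - 2) (m - 2) (by omega) (by omega)
  have e1 : N - 2 - 1 = N - 3 := by omega
  have e2 : m - 2 - 1 = m - 3 := by omega
  rw [e1, e2] at a2
  calc N.choose m * (m * (m - 1) * (m - 2)) = N.choose m * (m * (m - 1)) * (m - 2) := by ring
    _ = N * (N - 1) * ((N - 2).choose (m - 2) * (m - 2)) := by rw [a1]; ring
    _ = N * (N - 1) * ((N - 2) * (N - 3).choose (m - 3)) := by rw [a2]
    _ = _ := by ring

lemma choose_id4 (N m : ℕ) (h1 : 4 ≤ m) (h2 : m ≤ N) :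
    N.choose m * (m * (m - 1) * (m - 2) * (m - 3))
      = N * (N - 1) * (N - 2) * (N - 3) * (N - 4).choose (m - 4) := by
  have a1 := choose_id3 N m (by omega) h2
  have a2 := choose_id1 (N - 3) (m - 3) (by omega) (by omega)
  have e1 : N - 3 - 1 = N - 4 := by omega
  have e2 : m - 3 - 1 = m - 4 := by omega
  rw [e1, e2] at a2
  calc N.choose m * (m * (m - 1) * (m - 2) * (m - 3))
      = N.choose m * (m * (m - 1) * (m - 2)) * (m - 3) := by ring
    _ = N * (N - 1) * (N - 2) * ((N - 3).choose (m - 3) * (m - 3)) := by rw [a1]; ring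
    _ = N * (N - 1) * (N - 2) * ((N - 3) * (N - 4).choose (m - 4)) := by rw [a2]
    _ = _ := by ring

lemma ratioA (m n : ℕ) (hm : 2 ≤ m) (hn : 2 ≤ n) (g : Fin (m+n) → Fin (m+n) → ℝ) :
    ∑ S ∈ powersetCard m (univ : Finset (Fin (m+n))), ∑ i ∈ S, ∑ j ∈ S.erase i, g i j
      = (m:ℝ) * ((m:ℝ) - 1) / (((m+n:ℕ):ℝ) * (((m+n:ℕ):ℝ) - 1)) * ((m+n).choose m : ℝ) *
          ∑ i : Fin (m+n), ∑ j ∈ univ.erase i, g i j := by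
  rw [sum2 m hm g]
  have hcF : Fintype.card (Fin (m+n)) = m + n := Fintype.card_fin _
  rw [hcF]
  have key := choose_id2 (m+n) m hm (by omega)
  have e1 : ((m - 1 : ℕ) : ℝ) = (m:ℝ) - 1 := by rw [Nat.cast_sub (by omega)]; norm_num
  have e2 : ((m + n - 1 : ℕ) : ℝ) = ((m+n:ℕ):ℝ) - 1 := by rw [Nat.cast_sub (by omega)]; norm_num
  have keyR : ((m+n).choose m : ℝ) * ((m:ℝ) * ((m:ℝ) - 1))
      = ((m+n:ℕ):ℝ) * (((m+n:ℕ):ℝ) - 1) * ((m+n-2).choose (m-2) : ℝ) := by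
    rw [← e1, ← e2]; exact_mod_cast key
  have hN0 : ((m+n:ℕ):ℝ) ≠ 0 := by
    have : (4:ℝ) ≤ ((m+n:ℕ):ℝ) := by exact_mod_cast show 4 ≤ m + n by omega
    linarith
  have hN1 : ((m+n:ℕ):ℝ) - 1 ≠ 0 := by
    have : (4:ℝ) ≤ ((m+n:ℕ):ℝ) := by exact_mod_cast show 4 ≤ m + n by omega
    linarith
  have hcoef : ((m+n-2).choose (m-2) : ℝ)
      = (m:ℝ) * ((m:ℝ) - 1) / (((m+n:ℕ):ℝ) * (((m+n:ℕ):ℝ) - 1)) * ((m+n).choose m : ℝ) := by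
    rw [eq_comm, div_mul_eq_mul_div, div_eq_iff (mul_ne_zero hN0 hN1)]
    linear_combination keyR
  rw [hcoef]

lemma ratioB (m n : ℕ) (hm : 2 ≤ m) (hn : 2 ≤ n) (g : Fin (m+n) → Fin (m+n) → Fin (m+n) → ℝ) :
    ∑ S ∈ powersetCard m (univ : Finset (Fin (m+n))), ∑ i ∈ S, ∑ j ∈ S.erase i,
        ∑ u ∈ (S.erase i).erase j, g i j u
      = (m:ℝ) * ((m:ℝ) - 1) * ((m:ℝ) - 2) /
          (((m+n:ℕ):ℝ) * (((m+n:ℕ):ℝ) - 1) * (((m+n:ℕ):ℝ) - 2)) * ((m+n).choose m : ℝ) *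
          ∑ i : Fin (m+n), ∑ j ∈ univ.erase i, ∑ u ∈ (univ.erase i).erase j, g i j u := by
  rcases Nat.lt_or_ge m 3 with h | h
  · have hm2 : m = 2 := by omega
    have hz : ∑ S ∈ powersetCard m (univ : Finset (Fin (m+n))), ∑ i ∈ S, ∑ j ∈ S.erase i,
        ∑ u ∈ (S.erase i).erase j, g i j u = 0 := by
      refine Finset.sum_eq_zero fun S hS => ?_
      rw [Finset.mem_powersetCard] at hS
      exact sum3_vanish (by rw [hS.2]; omega) g
    have hm2' : (m:ℝ) = 2 := by rw [hm2]; norm_num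
    rw [hz, hm2']
    norm_num
  · rw [sum3 m h g]
    have hcF : Fintype.card (Fin (m+n)) = m + n := Fintype.card_fin _
    rw [hcF]
    have key := choose_id3 (m+n) m h (by omega)
    have e1 : ((m - 1 : ℕ) : ℝ) = (m:ℝ) - 1 := by rw [Nat.cast_sub (by omega)]; norm_num
    have e1' : ((m - 2 : ℕ) : ℝ) = (m:ℝ) - 2 := by rw [Nat.cast_sub (by omega)]; norm_num
    have e2 : ((m + n - 1 : ℕ) : ℝ) = ((m+n:ℕ):ℝ) - 1 := by rw [Nat.cast_sub (by omega)]; norm_num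
    have e2' : ((m + n - 2 : ℕ) : ℝ) = ((m+n:ℕ):ℝ) - 2 := by rw [Nat.cast_sub (by omega)]; norm_num
    have keyR : ((m+n).choose m : ℝ) * ((m:ℝ) * ((m:ℝ) - 1) * ((m:ℝ) - 2))
        = ((m+n:ℕ):ℝ) * (((m+n:ℕ):ℝ) - 1) * (((m+n:ℕ):ℝ) - 2) * ((m+n-3).choose (m-3) : ℝ) := by
      rw [← e1, ← e1', ← e2, ← e2']; exact_mod_cast key
    have hge : (4:ℝ) ≤ ((m+n:ℕ):ℝ) := by exact_mod_cast show 4 ≤ m + n by omega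
    have hN0 : ((m+n:ℕ):ℝ) ≠ 0 := by linarith
    have hN1 : ((m+n:ℕ):ℝ) - 1 ≠ 0 := by linarith
    have hN2 : ((m+n:ℕ):ℝ) - 2 ≠ 0 := by linarith
    have hcoef : ((m+n-3).choose (m-3) : ℝ)
        = (m:ℝ) * ((m:ℝ) - 1) * ((m:ℝ) - 2) /
            (((m+n:ℕ):ℝ) * (((m+n:ℕ):ℝ) - 1) * (((m+n:ℕ):ℝ) - 2)) * ((m+n).choose m : ℝ) := by
      rw [eq_comm, div_mul_eq_mul_div, div_eq_iff (mul_ne_zero (mul_ne_zero hN0 hN1) hN2)]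
      linear_combination keyR
    rw [hcoef]

lemma ratioC (m n : ℕ) (hm : 2 ≤ m) (hn : 2 ≤ n) (g : Fin (m+n) → Fin (m+n) → Fin (m+n) → Fin (m+n) → ℝ) :
    ∑ S ∈ powersetCard m (univ : Finset (Fin (m+n))), ∑ i ∈ S, ∑ j ∈ S.erase i,
        ∑ u ∈ (S.erase i).erase j, ∑ v ∈ ((S.erase i).erase j).erase u, g i j u v
      = (m:ℝ) * ((m:ℝ) - 1) * ((m:ℝ) - 2) * ((m:ℝ) - 3) /
          (((m+n:ℕ):ℝ) * (((m+n:ℕ):ℝ) - 1) * (((m+n:ℕ):ℝ) - 2) * (((m+n:ℕ):ℝ) - 3)) *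
          ((m+n).choose m : ℝ) *
          ∑ i : Fin (m+n), ∑ j ∈ univ.erase i, ∑ u ∈ (univ.erase i).erase j,
            ∑ v ∈ ((univ.erase i).erase j).erase u, g i j u v := by
  rcases Nat.lt_or_ge m 4 with h | h
  · have hz : ∑ S ∈ powersetCard m (univ : Finset (Fin (m+n))), ∑ i ∈ S, ∑ j ∈ S.erase i,
        ∑ u ∈ (S.erase i).erase j, ∑ v ∈ ((S.erase i).erase j).erase u, g i j u v = 0 := by
      refine Finset.sum_eq_zero fun S hS => ?_
      rw [Finset.mem_powersetCard] at hS
      exact sum4_vanish (by rw [hS.2]; omega) g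
    rw [hz]
    have hm23 : m = 2 ∨ m = 3 := by omega
    rcases hm23 with h2 | h3
    · have : (m:ℝ) = 2 := by rw [h2]; norm_num
      rw [this]; norm_num
    · have : (m:ℝ) = 3 := by rw [h3]; norm_num
      rw [this]; norm_num
  · rw [sum4 m h g]
    have hcF : Fintype.card (Fin (m+n)) = m + n := Fintype.card_fin _
    rw [hcF]
    have key := choose_id4 (m+n) m h (by omega)
    have e1 : ((m - 1 : ℕ) : ℝ) = (m:ℝ) - 1 := by rw [Nat.cast_sub (by omega)]; norm_num
    have e1' : ((m - 2 : ℕ) : ℝ) = (m:ℝ) - 2 := by rw [Nat.cast_sub (by omega)]; norm_num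
    have e1'' : ((m - 3 : ℕ) : ℝ) = (m:ℝ) - 3 := by rw [Nat.cast_sub (by omega)]; norm_num
    have e2 : ((m + n - 1 : ℕ) : ℝ) = ((m+n:ℕ):ℝ) - 1 := by rw [Nat.cast_sub (by omega)]; norm_num
    have e2' : ((m + n - 2 : ℕ) : ℝ) = ((m+n:ℕ):ℝ) - 2 := by rw [Nat.cast_sub (by omega)]; norm_num
    have e2'' : ((m + n - 3 : ℕ) : ℝ) = ((m+n:ℕ):ℝ) - 3 := by rw [Nat.cast_sub (by omega)]; norm_num
    have keyR : ((m+n).choose m : ℝ) * ((m:ℝ) * ((m:ℝ) - 1) * ((m:ℝ) - 2) * ((m:ℝ) - 3))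
        = ((m+n:ℕ):ℝ) * (((m+n:ℕ):ℝ) - 1) * (((m+n:ℕ):ℝ) - 2) * (((m+n:ℕ):ℝ) - 3) *
            ((m+n-4).choose (m-4) : ℝ) := by
      rw [← e1, ← e1', ← e1'', ← e2, ← e2', ← e2'']; exact_mod_cast key
    have hge : (4:ℝ) ≤ ((m+n:ℕ):ℝ) := by exact_mod_cast show 4 ≤ m + n by omega
    have hN0 : ((m+n:ℕ):ℝ) ≠ 0 := by linarith
    have hN1 : ((m+n:ℕ):ℝ) - 1 ≠ 0 := by linarith
    have hN2 : ((m+n:ℕ):ℝ) - 2 ≠ 0 := by linarith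
    have hN3 : ((m+n:ℕ):ℝ) - 3 ≠ 0 := by
      have hge6 : m + n ≥ 4 := by omega
      rcases Nat.lt_or_ge (m+n) 5 with h5 | h5
      · have : m + n = 4 := by omega
        rw [this]; norm_num
      · have : (5:ℝ) ≤ ((m+n:ℕ):ℝ) := by exact_mod_cast h5
        linarith
    have hcoef : ((m+n-4).choose (m-4) : ℝ)
        = (m:ℝ) * ((m:ℝ) - 1) * ((m:ℝ) - 2) * ((m:ℝ) - 3) /
            (((m+n:ℕ):ℝ) * (((m+n:ℕ):ℝ) - 1) * (((m+n:ℕ):ℝ) - 2) * (((m+n:ℕ):ℝ) - 3)) *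
            ((m+n).choose m : ℝ) := by
      rw [eq_comm, div_mul_eq_mul_div, div_eq_iff (mul_ne_zero (mul_ne_zero (mul_ne_zero hN0 hN1) hN2) hN3)]
      linear_combination keyR
    rw [hcoef]

variable {α : Type*} [DecidableEq α]

lemma sum_decomp2 (S : Finset α) {i j : α} (hi : i ∈ S) (hj : j ∈ S.erase i) (G : α → ℝ) :
    ∑ u ∈ S, G u = G i + G j + ∑ u ∈ (S.erase i).erase j, G u := by
  rw [← Finset.add_sum_erase S G hi, ← Finset.add_sum_erase (S.erase i) G hj, add_assoc]

lemma erase_sum_ite (S : Finset α) (i : α) (F : α → ℝ) :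
    ∑ j ∈ S.erase i, F j = ∑ j ∈ S, if j ≠ i then F j else 0 := by
  rw [← Finset.sum_filter, Finset.filter_ne' S i]

lemma swap_outer (S : Finset α) (g : α → α → α → ℝ) :
    ∑ i ∈ S, ∑ j ∈ S.erase i, ∑ u ∈ (S.erase i).erase j, g i j u
      = ∑ i ∈ S, ∑ j ∈ S.erase i, ∑ u ∈ (S.erase i).erase j, g j i u := by
  have step : ∀ h : α → α → α → ℝ,
      ∑ i ∈ S, ∑ j ∈ S.erase i, ∑ u ∈ (S.erase i).erase j, h i j u
        = ∑ i ∈ S, ∑ j ∈ S, if j ≠ i then ∑ u ∈ (S.erase i).erase j, h i j u else 0 := by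
    intro h
    exact Finset.sum_congr rfl fun i _ => erase_sum_ite S i _
  rw [step g, step (fun i j u => g j i u), Finset.sum_comm]
  refine Finset.sum_congr rfl fun i _ => Finset.sum_congr rfl fun j _ => ?_
  rw [Finset.erase_right_comm]
  exact if_congr ne_comm rfl rfl

lemma sq_expand (S : Finset α) (k : α → α → ℝ) (hsym : ∀ i j, k i j = k j i) :
    (∑ i ∈ S, ∑ j ∈ S.erase i, k i j)^2
      = 2 * (∑ i ∈ S, ∑ j ∈ S.erase i, (k i j)^2)
        + 4 * (∑ i ∈ S, ∑ j ∈ S.erase i, ∑ u ∈ (S.erase i).erase j, k i j * k i u)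
        + ∑ i ∈ S, ∑ j ∈ S.erase i, ∑ u ∈ (S.erase i).erase j,
            ∑ v ∈ ((S.erase i).erase j).erase u, k i j * k u v := by
  have h1 : (∑ i ∈ S, ∑ j ∈ S.erase i, k i j)^2
      = ∑ i ∈ S, ∑ j ∈ S.erase i, ∑ u ∈ S, ∑ v ∈ S.erase u, k i j * k u v := by
    calc (∑ i ∈ S, ∑ j ∈ S.erase i, k i j)^2
        = ∑ i ∈ S, ∑ u ∈ S, (∑ j ∈ S.erase i, k i j) * (∑ v ∈ S.erase u, k u v) := by
          rw [sq, Finset.sum_mul_sum]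
      _ = ∑ i ∈ S, ∑ u ∈ S, ∑ j ∈ S.erase i, ∑ v ∈ S.erase u, k i j * k u v := by
          exact Finset.sum_congr rfl fun i _ => Finset.sum_congr rfl fun u _ =>
            Finset.sum_mul_sum _ _ _ _
      _ = _ := Finset.sum_congr rfl fun i _ => Finset.sum_comm
  have h2 : ∀ i ∈ S, ∀ j ∈ S.erase i, (∑ u ∈ S, ∑ v ∈ S.erase u, k i j * k u v)
      = k i j * k i j + k i j * k j i
        + ((∑ u ∈ (S.erase i).erase j, k i j * k i u)
        + (∑ u ∈ (S.erase i).erase j, k i j * k j u)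
        + (∑ u ∈ (S.erase i).erase j, k i j * k u i)
        + (∑ u ∈ (S.erase i).erase j, k i j * k u j)
        + ∑ u ∈ (S.erase i).erase j, ∑ v ∈ ((S.erase i).erase j).erase u, k i j * k u v) := by
    intro i hi j hj
    have hij : j ≠ i := (Finset.mem_erase.1 hj).1
    have hjS : j ∈ S := (Finset.mem_erase.1 hj).2
    have hiej : i ∈ S.erase j := Finset.mem_erase.2 ⟨Ne.symm hij, hi⟩
    have gi : ∑ v ∈ S.erase i, k i j * k i v
        = k i j * k i j + ∑ v ∈ (S.erase i).erase j, k i j * k i v :=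
      (Finset.add_sum_erase _ _ hj).symm
    have gj : ∑ v ∈ S.erase j, k i j * k j v
        = k i j * k j i + ∑ v ∈ (S.erase i).erase j, k i j * k j v := by
      rw [← Finset.add_sum_erase (S.erase j) _ hiej, Finset.erase_right_comm]
    have gu : ∀ u ∈ (S.erase i).erase j, (∑ v ∈ S.erase u, k i j * k u v)
        = k i j * k u i + k i j * k u j
          + ∑ v ∈ ((S.erase i).erase j).erase u, k i j * k u v := by
      intro u hu
      have huj : u ≠ j := (Finset.mem_erase.1 hu).1
      have hui : u ≠ i := (Finset.mem_erase.1 (Finset.mem_erase.1 hu).2).1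
      have huS : u ∈ S := (Finset.mem_erase.1 (Finset.mem_erase.1 hu).2).2
      have hiu : i ∈ S.erase u := Finset.mem_erase.2 ⟨Ne.symm hui, hi⟩
      have hju : j ∈ (S.erase u).erase i := Finset.mem_erase.2 ⟨hij, Finset.mem_erase.2 ⟨Ne.symm huj, hjS⟩⟩
      rw [sum_decomp2 (S.erase u) hiu hju]
      congr 1
      rw [Finset.erase_right_comm (s := S) (a := u) (b := i),
        Finset.erase_right_comm (s := S.erase i) (a := u) (b := j)]
    rw [sum_decomp2 S hi hj (G := fun u => ∑ v ∈ S.erase u, k i j * k u v), gi, gj,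
      Finset.sum_congr rfl gu, Finset.sum_add_distrib, Finset.sum_add_distrib]
    ring
  rw [h1, Finset.sum_congr rfl (fun i hi => Finset.sum_congr rfl (fun j hj => h2 i hi j hj))]
  simp only [Finset.sum_add_distrib]
  have e1 : ∑ i ∈ S, ∑ j ∈ S.erase i, k i j * k i j = ∑ i ∈ S, ∑ j ∈ S.erase i, (k i j)^2 := by
    refine Finset.sum_congr rfl fun i _ => Finset.sum_congr rfl fun j _ => ?_; ring
  have e2 : ∑ i ∈ S, ∑ j ∈ S.erase i, k i j * k j i = ∑ i ∈ S, ∑ j ∈ S.erase i, (k i j)^2 := by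
    refine Finset.sum_congr rfl fun i _ => Finset.sum_congr rfl fun j _ => ?_
    rw [hsym j i]; ring
  have e4 : ∑ i ∈ S, ∑ j ∈ S.erase i, ∑ u ∈ (S.erase i).erase j, k i j * k j u
      = ∑ i ∈ S, ∑ j ∈ S.erase i, ∑ u ∈ (S.erase i).erase j, k i j * k i u := by
    rw [swap_outer S (fun i j u => k i j * k j u)]
    refine Finset.sum_congr rfl fun i _ => Finset.sum_congr rfl fun j _ =>
      Finset.sum_congr rfl fun u _ => ?_
    rw [hsym j i]
  have e5 : ∑ i ∈ S, ∑ j ∈ S.erase i, ∑ u ∈ (S.erase i).erase j, k i j * k u i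
      = ∑ i ∈ S, ∑ j ∈ S.erase i, ∑ u ∈ (S.erase i).erase j, k i j * k i u := by
    refine Finset.sum_congr rfl fun i _ => Finset.sum_congr rfl fun j _ =>
      Finset.sum_congr rfl fun u _ => ?_
    rw [hsym u i]
  have e6 : ∑ i ∈ S, ∑ j ∈ S.erase i, ∑ u ∈ (S.erase i).erase j, k i j * k u j
      = ∑ i ∈ S, ∑ j ∈ S.erase i, ∑ u ∈ (S.erase i).erase j, k i j * k i u := by
    rw [swap_outer S (fun i j u => k i j * k u j)]
    refine Finset.sum_congr rfl fun i _ => Finset.sum_congr rfl fun j _ =>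
      Finset.sum_congr rfl fun u _ => ?_
    rw [hsym j i, hsym u i]
  rw [e1, e2, e4, e5, e6]
  ring

section Aux
set_option linter.unusedSectionVars false

lemma pvar_eq (N m : ℕ) (hmn : m ≤ N) (f : Finset (Fin N) → ℝ) :
    pvar N m f = pexp N m (fun S => f S ^ 2) - (pexp N m f) ^ 2 := by
  have hK : ((N.choose m : ℕ) : ℝ) ≠ 0 := Nat.cast_ne_zero.mpr (Nat.choose_pos hmn).ne'
  have hcard : (((powersetCard m (univ : Finset (Fin N))).card : ℕ) : ℝ) = (N.choose m : ℝ) := by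
    rw [Finset.card_powersetCard, Finset.card_univ, Fintype.card_fin]
  unfold pvar pexp
  set c : ℝ := (∑ S ∈ powersetCard m (univ : Finset (Fin N)), f S) / (N.choose m : ℝ) with hc
  have expand : ∑ S ∈ powersetCard m (univ : Finset (Fin N)), (f S - c)^2
      = (∑ S ∈ powersetCard m (univ : Finset (Fin N)), f S ^ 2)
        - 2 * c * (∑ S ∈ powersetCard m (univ : Finset (Fin N)), f S)
        + ((powersetCard m (univ : Finset (Fin N))).card : ℝ) * c^2 := by
    rw [Finset.sum_congr rfl (fun S _ => (by ring :
      (f S - c)^2 = f S ^ 2 - 2 * c * f S + c^2)), Finset.sum_add_distrib,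
      Finset.sum_sub_distrib, ← Finset.mul_sum, Finset.sum_const, nsmul_eq_mul]
  rw [expand, hcard, hc]
  field_simp
  ring

end Aux

/-- Under the permutation null, `var(α) = (2A f₁(m) + 4B f₂(m) + C f₃(m))/(m²(m−1)²) − k̄²`. -/
theorem variance_alpha (m n : ℕ) (hm : 2 ≤ m) (hn : 2 ≤ n)
    (k : Fin (m + n) → Fin (m + n) → ℝ) (hsym : ∀ i j, k i j = k j i) :
    pvar (m + n) m (alphaStat (m + n) m k) =
      (2 * kA (m + n) k * (((m : ℝ) * ((m : ℝ) - 1)) / (((m : ℝ) + (n : ℝ)) * (((m : ℝ) + (n : ℝ)) - 1))) + 4 * kB (m + n) k * (((m : ℝ) * ((m : ℝ) - 1) * ((m : ℝ) - 2)) / (((m : ℝ) + (n : ℝ)) * (((m : ℝ) + (n : ℝ)) - 1) * (((m : ℝ) + (n : ℝ)) - 2))) + kC (m + n) k * (((m : ℝ) * ((m : ℝ) - 1) * ((m : ℝ) - 2) * ((m : ℝ) - 3)) / (((m : ℝ) + (n : ℝ)) * (((m : ℝ) + (n : ℝ)) - 1) * (((m : ℝ) + (n : ℝ)) - 2) * (((m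 : ℝ) + (n : ℝ)) - 3)))) / ((m : ℝ) ^ 2 * ((m : ℝ) - 1) ^ 2)
        - (kbar (m + n) k) ^ 2 := by
  have hmn4 : 4 ≤ m + n := by omega
  have hK : ((m+n).choose m : ℝ) ≠ 0 := Nat.cast_ne_zero.mpr (Nat.choose_pos (by omega)).ne'
  have hm0 : (m:ℝ) ≠ 0 := by
    have : (2:ℝ) ≤ (m:ℝ) := by exact_mod_cast hm
    linarith
  have hm1 : (m:ℝ) - 1 ≠ 0 := by
    have : (2:ℝ) ≤ (m:ℝ) := by exact_mod_cast hm
    linarith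
  have hge : (4:ℝ) ≤ ((m+n:ℕ):ℝ) := by exact_mod_cast hmn4
  have hN0 : ((m+n:ℕ):ℝ) ≠ 0 := by linarith
  have hN1 : ((m+n:ℕ):ℝ) - 1 ≠ 0 := by linarith
  have hN2 : ((m+n:ℕ):ℝ) - 2 ≠ 0 := by linarith
  have hN3 : ((m+n:ℕ):ℝ) - 3 ≠ 0 := by
    rcases Nat.lt_or_ge (m+n) 5 with h5 | h5
    · have h4 : m + n = 4 := by omega
      rw [h4]; norm_num
    · have : (5:ℝ) ≤ ((m+n:ℕ):ℝ) := by exact_mod_cast h5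
      linarith
  have hP0 : (m:ℝ) + (n:ℝ) ≠ 0 := by push_cast at hN0; exact hN0
  have hP1 : (m:ℝ) + (n:ℝ) - 1 ≠ 0 := by push_cast at hN1; exact hN1
  have hP2 : (m:ℝ) + (n:ℝ) - 2 ≠ 0 := by push_cast at hN2; exact hN2
  have hP3 : (m:ℝ) + (n:ℝ) - 3 ≠ 0 := by push_cast at hN3; exact hN3
  have hEa : pexp (m+n) m (alphaStat (m+n) m k) = kbar (m+n) k := by
    unfold pexp alphaStat kbar
    rw [← Finset.mul_sum, ratioA m n hm hn k]
    set T : ℝ := ∑ i : Fin (m+n), ∑ j ∈ (univ : Finset (Fin (m+n))).erase i, k i j with hT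
    push_cast
    field_simp
  have hsq : pexp (m+n) m (fun S => (alphaStat (m+n) m k S)^2)
      = (2 * kA (m+n) k * (((m:ℝ) * ((m:ℝ) - 1)) / (((m+n:ℕ):ℝ) * (((m+n:ℕ):ℝ) - 1)))
          + 4 * kB (m+n) k * (((m:ℝ) * ((m:ℝ) - 1) * ((m:ℝ) - 2)) /
              (((m+n:ℕ):ℝ) * (((m+n:ℕ):ℝ) - 1) * (((m+n:ℕ):ℝ) - 2)))
          + kC (m+n) k * (((m:ℝ) * ((m:ℝ) - 1) * ((m:ℝ) - 2) * ((m:ℝ) - 3)) /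
              (((m+n:ℕ):ℝ) * (((m+n:ℕ):ℝ) - 1) * (((m+n:ℕ):ℝ) - 2) * (((m+n:ℕ):ℝ) - 3)))) /
          ((m:ℝ)^2 * ((m:ℝ) - 1)^2) := by
    unfold pexp alphaStat
    have step1 : ∀ S : Finset (Fin (m+n)),
        (((m:ℝ) * ((m:ℝ) - 1))⁻¹ * ∑ i ∈ S, ∑ j ∈ S.erase i, k i j)^2
          = (((m:ℝ) * ((m:ℝ) - 1))⁻¹)^2 *
              (2 * (∑ i ∈ S, ∑ j ∈ S.erase i, (k i j)^2)
                + 4 * (∑ i ∈ S, ∑ j ∈ S.erase i, ∑ u ∈ (S.erase i).erase j, k i j * k i u)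
                + ∑ i ∈ S, ∑ j ∈ S.erase i, ∑ u ∈ (S.erase i).erase j,
                    ∑ v ∈ ((S.erase i).erase j).erase u, k i j * k u v) := by
      intro S
      rw [mul_pow, sq_expand S k hsym]
    rw [Finset.sum_congr rfl (fun S _ => step1 S), ← Finset.mul_sum]
    have split : ∑ S ∈ powersetCard m (univ : Finset (Fin (m+n))),
        (2 * (∑ i ∈ S, ∑ j ∈ S.erase i, (k i j)^2)
          + 4 * (∑ i ∈ S, ∑ j ∈ S.erase i, ∑ u ∈ (S.erase i).erase j, k i j * k i u)
          + ∑ i ∈ S, ∑ j ∈ S.erase i, ∑ u ∈ (S.erase i).erase j,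
              ∑ v ∈ ((S.erase i).erase j).erase u, k i j * k u v)
        = 2 * (∑ S ∈ powersetCard m (univ : Finset (Fin (m+n))),
              ∑ i ∈ S, ∑ j ∈ S.erase i, (k i j)^2)
          + 4 * (∑ S ∈ powersetCard m (univ : Finset (Fin (m+n))),
              ∑ i ∈ S, ∑ j ∈ S.erase i, ∑ u ∈ (S.erase i).erase j, k i j * k i u)
          + ∑ S ∈ powersetCard m (univ : Finset (Fin (m+n))),
              ∑ i ∈ S, ∑ j ∈ S.erase i, ∑ u ∈ (S.erase i).erase j,
                ∑ v ∈ ((S.erase i).erase j).erase u, k i j * k u v := by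
      rw [Finset.sum_add_distrib, Finset.sum_add_distrib, ← Finset.mul_sum, ← Finset.mul_sum]
    rw [split, ratioA m n hm hn (fun i j => (k i j)^2),
      ratioB m n hm hn (fun i j u => k i j * k i u),
      ratioC m n hm hn (fun i j u v => k i j * k u v)]
    have eA : (∑ i : Fin (m+n), ∑ j ∈ (univ : Finset (Fin (m+n))).erase i, (k i j)^2)
        = kA (m+n) k := rfl
    have eB : (∑ i : Fin (m+n), ∑ j ∈ (univ : Finset (Fin (m+n))).erase i,
        ∑ u ∈ ((univ : Finset (Fin (m+n))).erase i).erase j, k i j * k i u) = kB (m+n) k := rfl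
    have eC : (∑ i : Fin (m+n), ∑ j ∈ (univ : Finset (Fin (m+n))).erase i,
        ∑ u ∈ ((univ : Finset (Fin (m+n))).erase i).erase j,
          ∑ v ∈ (((univ : Finset (Fin (m+n))).erase i).erase j).erase u, k i j * k u v)
        = kC (m+n) k := rfl
    rw [eA, eB, eC]
    set a : ℝ := kA (m+n) k
    set b : ℝ := kB (m+n) k
    set c : ℝ := kC (m+n) k
    set K : ℝ := ((m+n).choose m : ℝ) with hKdef
    push_cast
    field_simp
  rw [pvar_eq (m+n) m (by omega) (alphaStat (m+n) m k), hEa]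
  have hfin : pexp (m+n) m (fun S => alphaStat (m+n) m k S ^ 2)
      = pexp (m+n) m (fun S => (alphaStat (m+n) m k S)^2) := rfl
  rw [hfin, hsq]
  push_cast
  ring
end

section
/- Under the permutation null distribution, the variance of β equals {2A·f₁(n) + 4B·f₂(n) + C·f₃(n)}/(n²(n−1)²) − k̄², where f₁(x) = x(x−1)/(N(N−1)), f₂(x) = x(x−1)(x−2)/(N(N−1)(N−2)), f₃(x) = x(x−1)(x−2)(x−3)/(N(N−1)(N−2)(N−3)), A = Σ_{i≠j} k_{ij}², B = Σ over triples of pairwise distinct indices (i,j,u) of k_{ij}k_{iu}, and C = Σ over quadruples of pairwise distinct indices (i,j,u,v) of k_{ij}k_{uv}. -/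
/-!
Write `β(S) = (n(n-1))⁻¹ Σ k i j`, the sum running over ordered pairs of distinct points of
`T = Sᶜ`. Squaring and sorting the products `k i j * k u v` by how many of `u, v` coincide with
`i, j` gives, for symmetric `k`, `2 A(T) + 4 B(T) + C(T)`, where `A(T), B(T), C(T)` are the sums
`A, B, C` restricted to `T`. These are sums over distinct `r`-tuples (`r = 2, 3, 4`), and `r` fixed
points all lie in `Sᶜ` with probability `n(n-1)⋯(n-r+1) / N(N-1)⋯(N-r+1)`, so taking expectations
turns `A(T), B(T), C(T)` into `f₁(n) A, f₂(n) B, f₃(n) C`; with `r = 2` the same argument gives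
`E β = k̄`.
-/

open Finset Matrix Asymptotics

section DistinctTuples

variable {α R : Type*} [DecidableEq α]

def sumDistinct₂ [AddCommMonoid R] (T : Finset α) (f : α → α → R) : R :=
  ∑ i ∈ T, ∑ j ∈ T.erase i, f i j

def sumDistinct₃ [AddCommMonoid R] (T : Finset α) (f : α → α → α → R) : R :=
  ∑ i ∈ T, ∑ j ∈ T.erase i, ∑ u ∈ (T.erase i).erase j, f i j u

def sumDistinct₄ [AddCommMonoid R] (T : Finset α) (f : α → α → α → α → R) : R :=
  ∑ i ∈ T, ∑ j ∈ T.erase i, ∑ u ∈ (T.erase i).erase j, ∑ v ∈ ((T.erase i).erase j).erase u,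
    f i j u v

theorem sumDistinct₂_swap [AddCommMonoid R] (T : Finset α) (f : α → α → R) :
    sumDistinct₂ T (fun i j => f j i) = sumDistinct₂ T f :=
  Finset.sum_comm' fun i j => by simp only [mem_erase]; grind

theorem sumDistinct₂_eq_of_mem [AddCommMonoid R] {T : Finset α} {a : α} (ha : a ∈ T)
    (f : α → α → R) :
    sumDistinct₂ T f = ∑ v ∈ T.erase a, (f a v + f v a) + sumDistinct₂ (T.erase a) f := by
  have hrow : ∀ u ∈ T.erase a, ∑ v ∈ T.erase u, f u v = f u a + ∑ v ∈ (T.erase a).erase u, f u v :=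
    fun u hu => by
      rw [← add_sum_erase _ _ (mem_erase.2 ⟨(ne_of_mem_erase hu).symm, ha⟩), erase_right_comm]
  rw [sumDistinct₂, ← add_sum_erase _ _ ha, sum_congr rfl hrow, sum_add_distrib, sum_add_distrib,
    sumDistinct₂, add_assoc]

theorem sumDistinct₂_eq_of_mem_of_mem [AddCommMonoid R] {T : Finset α} {i j : α} (hi : i ∈ T)
    (hj : j ∈ T.erase i) (f : α → α → R) :
    sumDistinct₂ T f = f i j + f j i + ∑ v ∈ (T.erase i).erase j, (f i v + f v i)
      + ∑ v ∈ (T.erase i).erase j, (f j v + f v j) + sumDistinct₂ ((T.erase i).erase j) f := by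
  rw [sumDistinct₂_eq_of_mem hi, sumDistinct₂_eq_of_mem hj, ← add_sum_erase _ _ hj]
  abel

theorem sumDistinct₃_swap_eq [CommSemiring R] (T : Finset α) {k : α → α → R}
    (hk : ∀ i j, k i j = k j i) :
    sumDistinct₃ T (fun i j u => k i j * k j u) = sumDistinct₃ T (fun i j u => k i j * k i u) :=
  calc sumDistinct₃ T (fun i j u => k i j * k j u)
      = sumDistinct₂ T (fun i j => ∑ u ∈ (T.erase j).erase i, k j i * k i u) :=
        (sumDistinct₂_swap T _).symm
    _ = _ := sum_congr rfl fun i _ => sum_congr rfl fun j _ => by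
      dsimp only
      rw [erase_right_comm, hk j i]

theorem sq_sumDistinct₂ [CommSemiring R] (T : Finset α) {k : α → α → R}
    (hk : ∀ i j, k i j = k j i) :
    sumDistinct₂ T k ^ 2 = 2 * sumDistinct₂ T (fun i j => k i j ^ 2)
      + 4 * sumDistinct₃ T (fun i j u => k i j * k i u)
      + sumDistinct₄ T (fun i j u v => k i j * k u v) := by
  have hsym : ∀ (s : Finset α) a, ∑ v ∈ s, (k a v + k v a) = 2 * ∑ v ∈ s, k a v := fun s a => by
    rw [two_mul, ← sum_add_distrib]
    exact sum_congr rfl fun v _ => by rw [hk v a]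
  have hrow : ∀ i ∈ T, ∀ j ∈ T.erase i, k i j * sumDistinct₂ T k =
      2 * k i j ^ 2 + 2 * (k i j * ∑ u ∈ (T.erase i).erase j, k i u)
        + 2 * (k i j * ∑ u ∈ (T.erase i).erase j, k j u)
        + k i j * sumDistinct₂ ((T.erase i).erase j) k := by
    intro i hi j hj
    rw [sumDistinct₂_eq_of_mem_of_mem hi hj, hk j i, hsym, hsym]
    ring
  have hswap := sumDistinct₃_swap_eq T hk
  rw [sq]
  nth_rw 1 [sumDistinct₂]
  simp only [sum_mul]
  rw [sum_congr rfl fun i hi => sum_congr rfl (hrow i hi)]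
  simp only [sumDistinct₂, sumDistinct₃, sumDistinct₄, sum_add_distrib, ← mul_sum] at hswap ⊢
  rw [hswap]
  ring

variable [Fintype α]

theorem card_powersetCard_filter_subset_compl (A : Finset α) (m : ℕ) :
    #{S ∈ powersetCard m (univ : Finset α) | A ⊆ Sᶜ} = (Fintype.card α - #A).choose m := by
  have h : {S ∈ powersetCard m (univ : Finset α) | A ⊆ Sᶜ} = powersetCard m Aᶜ := by
    ext S
    simp [subset_compl_comm (s := A), and_comm]
  rw [h, card_powersetCard, card_compl]

theorem sumDistinct₂_eq_sum_ite [AddCommMonoid R] (T : Finset α) (f : α → α → R) :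
    sumDistinct₂ T f = ∑ i, ∑ j ∈ univ.erase i, if {i, j} ⊆ T then f i j else 0 := by
  simp only [sumDistinct₂, insert_subset_iff, singleton_subset_iff, ite_and, sum_ite_irrel,
    sum_const_zero, sum_ite_mem, erase_inter, univ_inter]

theorem sumDistinct₃_eq_sum_ite [AddCommMonoid R] (T : Finset α) (f : α → α → α → R) :
    sumDistinct₃ T f = ∑ i, ∑ j ∈ univ.erase i, ∑ u ∈ (univ.erase i).erase j,
      if {i, j, u} ⊆ T then f i j u else 0 := by
  simp only [sumDistinct₃, insert_subset_iff, singleton_subset_iff, ite_and, sum_ite_irrel,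
    sum_const_zero, sum_ite_mem, erase_inter, univ_inter]

theorem sumDistinct₄_eq_sum_ite [AddCommMonoid R] (T : Finset α) (f : α → α → α → α → R) :
    sumDistinct₄ T f = ∑ i, ∑ j ∈ univ.erase i, ∑ u ∈ (univ.erase i).erase j,
      ∑ v ∈ ((univ.erase i).erase j).erase u, if {i, j, u, v} ⊆ T then f i j u v else 0 := by
  simp only [sumDistinct₄, insert_subset_iff, singleton_subset_iff, ite_and, sum_ite_irrel,
    sum_const_zero, sum_ite_mem, erase_inter, univ_inter]

end DistinctTuples

theorem Nat.choose_sub_mul_descFactorial (m n t : ℕ) :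
    (m + n - t).choose m * (m + n).descFactorial t = (m + n).choose m * n.descFactorial t := by
  rcases le_or_gt t n with h | h
  · have hmul := Nat.choose_mul (n := m + n) (k := n) (s := t) h
    have h1 : (m + n).choose n = (m + n).choose m := Nat.choose_symm_add.symm
    have h2 : (m + n - t).choose (n - t) = (m + n - t).choose m := by
      rw [show m + n - t = m + (n - t) by omega, Nat.choose_symm_add]
    rw [Nat.descFactorial_eq_factorial_mul_choose, Nat.descFactorial_eq_factorial_mul_choose,
      ← h1, ← h2]
    grind
  · rw [Nat.descFactorial_eq_zero_iff_lt.2 h, mul_zero, mul_eq_zero]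
    rcases le_or_gt t (m + n) with h' | h'
    · exact .inl (Nat.choose_eq_zero_of_lt (by omega))
    · exact .inr (Nat.descFactorial_eq_zero_iff_lt.2 h')

section PermutationNull

variable {N m n : ℕ}

theorem pexp_add (f g : Finset (Fin N) → ℝ) :
    pexp N m (fun S => f S + g S) = pexp N m f + pexp N m g := by
  simp only [pexp, sum_add_distrib, add_div]

theorem pexp_const_mul (c : ℝ) (f : Finset (Fin N) → ℝ) :
    pexp N m (fun S => c * f S) = c * pexp N m f := by
  simp only [pexp, ← mul_sum, mul_div_assoc]

theorem pexp_sum {ι : Type*} (s : Finset ι) (f : ι → Finset (Fin N) → ℝ) :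
    pexp N m (fun S => ∑ x ∈ s, f x S) = ∑ x ∈ s, pexp N m (f x) := by
  simp only [pexp, sum_div]
  exact sum_comm

theorem pvar_eq_pexp_sq_sub (h : m ≤ N) (f : Finset (Fin N) → ℝ) :
    pvar N m f = pexp N m (fun S => f S ^ 2) - pexp N m f ^ 2 := by
  have hc : (N.choose m : ℝ) ≠ 0 := Nat.cast_ne_zero.2 (Nat.choose_pos h).ne'
  simp only [pvar, pexp, sub_sq, sum_add_distrib, sum_sub_distrib, ← sum_mul, ← mul_sum, sum_const,
    card_powersetCard, card_univ, Fintype.card_fin, nsmul_eq_mul]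
  field_simp
  ring

/-- The probability that `t` given points all avoid a uniformly random `m`-subset of `m + n`
points. -/
noncomputable def inclusionProb (m n t : ℕ) : ℝ := n.descFactorial t / (m + n).descFactorial t

theorem inclusionProb_eq_prod (m n t : ℕ) :
    inclusionProb m n t = (∏ j ∈ range t, ((n : ℝ) - j)) / ∏ j ∈ range t, ((m : ℝ) + n - j) := by
  simp only [inclusionProb, ← descPochhammer_eval_eq_descFactorial,
    descPochhammer_eval_eq_prod_range]
  push_cast
  rfl

theorem pexp_ite_subset_compl (A : Finset (Fin (m + n))) (c : ℝ) :
    pexp (m + n) m (fun S => if A ⊆ Sᶜ then c else 0) = inclusionProb m n #A * c := by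
  have hc : ((m + n).choose m : ℝ) ≠ 0 := Nat.cast_ne_zero.2 (Nat.choose_pos (by omega)).ne'
  have hd : ((m + n).descFactorial #A : ℝ) ≠ 0 := Nat.cast_ne_zero.2 fun h0 =>
    (Nat.descFactorial_eq_zero_iff_lt.1 h0).not_ge ((card_le_univ A).trans_eq (Fintype.card_fin _))
  have key := congrArg (Nat.cast : ℕ → ℝ) (Nat.choose_sub_mul_descFactorial m n #A)
  push_cast at key
  rw [pexp, sum_ite, sum_const_zero, add_zero, sum_const, card_powersetCard_filter_subset_compl,
    Fintype.card_fin, nsmul_eq_mul, inclusionProb]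
  field_simp
  linear_combination c * key

theorem inclusionProb_two (m n : ℕ) :
    inclusionProb m n 2 = (n : ℝ) * ((n : ℝ) - 1) / (((m : ℝ) + n) * (((m : ℝ) + n) - 1)) := by
  norm_num [inclusionProb_eq_prod, prod_range_succ]

theorem inclusionProb_three (m n : ℕ) :
    inclusionProb m n 3 = (n : ℝ) * ((n : ℝ) - 1) * ((n : ℝ) - 2)
      / (((m : ℝ) + n) * (((m : ℝ) + n) - 1) * (((m : ℝ) + n) - 2)) := by
  norm_num [inclusionProb_eq_prod, prod_range_succ]

theorem inclusionProb_four (m n : ℕ) :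
    inclusionProb m n 4 = (n : ℝ) * ((n : ℝ) - 1) * ((n : ℝ) - 2) * ((n : ℝ) - 3)
      / (((m : ℝ) + n) * (((m : ℝ) + n) - 1) * (((m : ℝ) + n) - 2) * (((m : ℝ) + n) - 3)) := by
  norm_num [inclusionProb_eq_prod, prod_range_succ]

theorem pexp_sumDistinct₂_compl (f : Fin (m + n) → Fin (m + n) → ℝ) :
    pexp (m + n) m (fun S => sumDistinct₂ Sᶜ f) = inclusionProb m n 2 * sumDistinct₂ univ f := by
  have h (S : Finset (Fin (m + n))) := sumDistinct₂_eq_sum_ite Sᶜ f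
  simp only [h, pexp_sum, pexp_ite_subset_compl]
  simp only [sumDistinct₂, mul_sum]
  refine sum_congr rfl fun i _ => sum_congr rfl fun j hj => ?_
  rw [card_pair (ne_of_mem_erase hj).symm]

theorem pexp_sumDistinct₃_compl (f : Fin (m + n) → Fin (m + n) → Fin (m + n) → ℝ) :
    pexp (m + n) m (fun S => sumDistinct₃ Sᶜ f) = inclusionProb m n 3 * sumDistinct₃ univ f := by
  have h (S : Finset (Fin (m + n))) := sumDistinct₃_eq_sum_ite Sᶜ f
  simp only [h, pexp_sum, pexp_ite_subset_compl]
  simp only [sumDistinct₃, mul_sum]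
  refine sum_congr rfl fun i _ => sum_congr rfl fun j hj => sum_congr rfl fun u hu => ?_
  simp only [mem_erase] at hj hu
  rw [card_insert_of_notMem (by simp [hj.1.symm, hu.2.1.symm]), card_pair hu.1.symm]

theorem pexp_sumDistinct₄_compl (f : Fin (m + n) → Fin (m + n) → Fin (m + n) → Fin (m + n) → ℝ) :
    pexp (m + n) m (fun S => sumDistinct₄ Sᶜ f) = inclusionProb m n 4 * sumDistinct₄ univ f := by
  have h (S : Finset (Fin (m + n))) := sumDistinct₄_eq_sum_ite Sᶜ f
  simp only [h, pexp_sum, pexp_ite_subset_compl]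
  simp only [sumDistinct₄, mul_sum]
  refine sum_congr rfl fun i _ => sum_congr rfl fun j hj => sum_congr rfl fun u hu =>
    sum_congr rfl fun v hv => ?_
  simp only [mem_erase] at hj hu hv
  rw [card_insert_of_notMem (by simp [hj.1.symm, hu.2.1.symm, hv.2.2.1.symm]),
    card_insert_of_notMem (by simp [hu.1.symm, hv.2.1.symm]), card_pair hv.1.symm]

end PermutationNull

theorem variance_beta_general (m n : ℕ) (hn : 2 ≤ n)
    (k : Fin (m + n) → Fin (m + n) → ℝ) (hsym : ∀ i j, k i j = k j i) :
    pvar (m + n) m (betaStat (m + n) n k) =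
      (2 * kA (m + n) k * (((n : ℝ) * ((n : ℝ) - 1)) / (((m : ℝ) + (n : ℝ)) * (((m : ℝ) + (n : ℝ)) - 1))) + 4 * kB (m + n) k * (((n : ℝ) * ((n : ℝ) - 1) * ((n : ℝ) - 2)) / (((m : ℝ) + (n : ℝ)) * (((m : ℝ) + (n : ℝ)) - 1) * (((m : ℝ) + (n : ℝ)) - 2))) + kC (m + n) k * (((n : ℝ) * ((n : ℝ) - 1) * ((n : ℝ) - 2) * ((n : ℝ) - 3)) / (((m : ℝ) + (n : ℝ)) * (((m : ℝ) + (n : ℝ)) - 1) * (((m : ℝ) + (n : ℝ)) - 2) * (((m : ℝ) + (n : ℝ)) - 3)))) / ((n : ℝ) ^ 2 * ((n : ℝ) - 1) ^ 2)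
        - (kbar (m + n) k) ^ 2 := by
  have hβ : betaStat (m + n) n k = fun S => ((n : ℝ) * (n - 1))⁻¹ * sumDistinct₂ Sᶜ k := rfl
  have hn' : (2 : ℝ) ≤ n := by exact_mod_cast hn
  have hn0 : (n : ℝ) ≠ 0 := by positivity
  have hn1 : (n : ℝ) - 1 ≠ 0 := by linarith
  have hmean : pexp (m + n) m (betaStat (m + n) n k) = kbar (m + n) k := by
    rw [hβ, pexp_const_mul, pexp_sumDistinct₂_compl, inclusionProb_two, kbar, sumDistinct₂,
      Nat.cast_add]
    field_simp
  have hA : kA (m + n) k = sumDistinct₂ univ (fun i j => k i j ^ 2) := rfl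
  have hB : kB (m + n) k = sumDistinct₃ univ (fun i j u => k i j * k i u) := rfl
  have hC : kC (m + n) k = sumDistinct₄ univ (fun i j u v => k i j * k u v) := rfl
  rw [pvar_eq_pexp_sq_sub (Nat.le_add_right m n), hmean, hβ, hA, hB, hC, ← inclusionProb_two,
    ← inclusionProb_three, ← inclusionProb_four]
  simp only [mul_pow, sq_sumDistinct₂ _ hsym, pexp_const_mul, pexp_add, pexp_sumDistinct₂_compl,
    pexp_sumDistinct₃_compl, pexp_sumDistinct₄_compl]
  field_simp

/-- Under the permutation null, `var(β) = (2A f₁(n) + 4B f₂(n) + C f₃(n))/(n²(n−1)²) − k̄²`. -/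
theorem variance_beta (m n : ℕ) (hm : 2 ≤ m) (hn : 2 ≤ n)
    (k : Fin (m + n) → Fin (m + n) → ℝ) (hsym : ∀ i j, k i j = k j i) :
    pvar (m + n) m (betaStat (m + n) n k) =
      (2 * kA (m + n) k * (((n : ℝ) * ((n : ℝ) - 1)) / (((m : ℝ) + (n : ℝ)) * (((m : ℝ) + (n : ℝ)) - 1))) + 4 * kB (m + n) k * (((n : ℝ) * ((n : ℝ) - 1) * ((n : ℝ) - 2)) / (((m : ℝ) + (n : ℝ)) * (((m : ℝ) + (n : ℝ)) - 1) * (((m : ℝ) + (n : ℝ)) - 2))) + kC (m + n) k * (((n : ℝ) * ((n : ℝ) - 1) * ((n : ℝ) - 2) * ((n : ℝ) - 3)) / (((m : ℝ) + (n : ℝ)) * (((m : ℝ) + (n : ℝ)) - 1) * (((m : ℝ) + (n : ℝ)) - 2) * (((m : ℝ) + (n : ℝ)) - 3)))) / ((n : ℝ) ^ 2 * ((n : ℝ) - 1) ^ 2)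
        - (kbar (m + n) k) ^ 2 :=
  variance_beta_general m n hn k hsym
end

section
/- Under the permutation null distribution, the covariance of α and β equals C/(N(N−1)(N−2)(N−3)) − k̄², where C = Σ over quadruples of pairwise distinct indices (i,j,u,v) of k_{ij}k_{uv}. -/
open Finset Matrix Asymptotics

/-! ### Auxiliary lemmas for `covariance_alpha_beta` -/

section CovAux
open Finset

private lemma count_lemma (N m : ℕ) (a b : Finset (Fin N)) (hd : Disjoint a b) (ham : a.card ≤ m) :
    ((Finset.powersetCard m (Finset.univ : Finset (Fin N))).filter
      (fun S => a ⊆ S ∧ Disjoint b S)).card = (N - a.card - b.card).choose (m - a.card) := by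
  have h1 : ((Finset.powersetCard m (Finset.univ : Finset (Fin N))).filter
      (fun S => a ⊆ S ∧ Disjoint b S)).card
      = (Finset.powersetCard (m - a.card) ((a ∪ b)ᶜ)).card := by
    apply Finset.card_bij' (fun S _ => S \ a) (fun T _ => T ∪ a)
    · intro S hS
      simp only [mem_filter, mem_powersetCard] at hS
      obtain ⟨⟨_, hcard⟩, haS, hbS⟩ := hS
      simp only [mem_powersetCard]
      constructor
      · intro x hx
        simp only [mem_sdiff] at hx
        simp only [mem_compl, mem_union]
        push_neg
        exact ⟨hx.2, fun hxb => (disjoint_left.mp hbS) hxb hx.1⟩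
      · rw [card_sdiff_of_subset haS, hcard]
    · intro T hT
      simp only [mem_powersetCard] at hT
      obtain ⟨hTsub, hTcard⟩ := hT
      have hTa : Disjoint T a := by
        refine disjoint_left.mpr fun x hxT hxa => ?_
        have := hTsub hxT
        simp only [mem_compl, mem_union] at this
        exact this (Or.inl hxa)
      simp only [mem_filter, mem_powersetCard]
      refine ⟨⟨subset_univ _, ?_⟩, subset_union_right, ?_⟩
      · rw [card_union_of_disjoint hTa, hTcard, Nat.sub_add_cancel ham]
      · refine disjoint_left.mpr fun x hxb => ?_
        simp only [mem_union]
        push_neg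
        refine ⟨fun hxT => ?_, fun hxa => (disjoint_left.mp hd) hxa hxb⟩
        have := hTsub hxT
        simp only [mem_compl, mem_union] at this
        exact this (Or.inr hxb)
    · intro S hS
      simp only [mem_filter] at hS
      exact sdiff_union_of_subset hS.2.1
    · intro T hT
      simp only [mem_powersetCard] at hT
      have hTa : Disjoint T a := by
        refine disjoint_left.mpr fun x hxT hxa => ?_
        have := hT.1 hxT
        simp only [mem_compl, mem_union] at this
        exact this (Or.inl hxa)
      exact union_sdiff_cancel_right hTa
  rw [h1, card_powersetCard, card_compl, card_union_of_disjoint hd, Fintype.card_fin]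
  congr 1
  omega

private lemma count_pair (N m : ℕ) (hm : 2 ≤ m) (i j : Fin N) (hij : j ≠ i) :
    ((Finset.powersetCard m (Finset.univ : Finset (Fin N))).filter
      (fun S => i ∈ S ∧ j ∈ S)).card = (N - 2).choose (m - 2) := by
  have hc2 : ({i, j} : Finset (Fin N)).card = 2 := by
    rw [card_insert_of_notMem (by simp [hij.symm]), card_singleton]
  have heq : (Finset.powersetCard m (Finset.univ : Finset (Fin N))).filter
        (fun S => i ∈ S ∧ j ∈ S)
      = (Finset.powersetCard m (Finset.univ : Finset (Fin N))).filter
        (fun S => ({i, j} : Finset (Fin N)) ⊆ S ∧ Disjoint (∅ : Finset (Fin N)) S) := by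
    apply filter_congr; intro S _; simp [insert_subset_iff]
  rw [heq, count_lemma N m _ _ (by simp) (by omega), hc2, card_empty]
  simp

private lemma count_pair_compl (N m : ℕ) (i j : Fin N) (hij : j ≠ i) :
    ((Finset.powersetCard m (Finset.univ : Finset (Fin N))).filter
      (fun S => i ∈ Sᶜ ∧ j ∈ Sᶜ)).card = (N - 2).choose m := by
  have hc2 : ({i, j} : Finset (Fin N)).card = 2 := by
    rw [card_insert_of_notMem (by simp [hij.symm]), card_singleton]
  have heq : (Finset.powersetCard m (Finset.univ : Finset (Fin N))).filter
        (fun S => i ∈ Sᶜ ∧ j ∈ Sᶜ)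
      = (Finset.powersetCard m (Finset.univ : Finset (Fin N))).filter
        (fun S => (∅ : Finset (Fin N)) ⊆ S ∧ Disjoint ({i, j} : Finset (Fin N)) S) := by
    apply filter_congr; intro S _
    simp [insert_subset_iff, disjoint_insert_left, disjoint_singleton_left]
  rw [heq, count_lemma N m _ _ (by simp) (Nat.zero_le _), hc2, card_empty]
  simp

private lemma count_quad (N m : ℕ) (hm : 2 ≤ m) (i j u v : Fin N) (hij : j ≠ i) (huv : v ≠ u)
    (hui : u ≠ i) (huj : u ≠ j) (hvi : v ≠ i) (hvj : v ≠ j) :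
    ((Finset.powersetCard m (Finset.univ : Finset (Fin N))).filter
      (fun S => (i ∈ S ∧ j ∈ S) ∧ (u ∈ Sᶜ ∧ v ∈ Sᶜ))).card = (N - 4).choose (m - 2) := by
  have hc2 : ({i, j} : Finset (Fin N)).card = 2 := by
    rw [card_insert_of_notMem (by simp [hij.symm]), card_singleton]
  have hc2' : ({u, v} : Finset (Fin N)).card = 2 := by
    rw [card_insert_of_notMem (by simp [huv.symm]), card_singleton]
  have heq : (Finset.powersetCard m (Finset.univ : Finset (Fin N))).filter
        (fun S => (i ∈ S ∧ j ∈ S) ∧ (u ∈ Sᶜ ∧ v ∈ Sᶜ))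
      = (Finset.powersetCard m (Finset.univ : Finset (Fin N))).filter
        (fun S => ({i, j} : Finset (Fin N)) ⊆ S ∧ Disjoint ({u, v} : Finset (Fin N)) S) := by
    apply filter_congr; intro S _
    simp [insert_subset_iff, disjoint_insert_left, disjoint_singleton_left, and_comm]
  have hd : Disjoint ({i, j} : Finset (Fin N)) ({u, v} : Finset (Fin N)) := by
    simp [disjoint_insert_left, disjoint_insert_right, disjoint_singleton_left,
      disjoint_singleton_right, hui.symm, huj.symm, hvi.symm, hvj.symm]
    exact ⟨⟨hui, huj⟩, hvi, hvj⟩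
  rw [heq, count_lemma N m _ _ hd (by omega), hc2, hc2']
  congr 1

private lemma count_quad_zero (N m : ℕ) (i j u v : Fin N)
    (h : u = i ∨ u = j ∨ v = i ∨ v = j) :
    ((Finset.powersetCard m (Finset.univ : Finset (Fin N))).filter
      (fun S => (i ∈ S ∧ j ∈ S) ∧ (u ∈ Sᶜ ∧ v ∈ Sᶜ))) = ∅ := by
  rw [Finset.filter_eq_empty_iff]
  rintro S _ ⟨⟨hi, hj⟩, hu, hv⟩
  rw [Finset.mem_compl] at hu hv
  rcases h with h | h | h | h <;> subst h <;> contradiction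

private lemma double_sum_indicator (N : ℕ) (T : Finset (Fin N)) (g : Fin N → Fin N → ℝ) :
    ∑ i ∈ T, ∑ j ∈ T.erase i, g i j
      = ∑ i : Fin N, ∑ j ∈ (univ : Finset (Fin N)).erase i,
          (if i ∈ T ∧ j ∈ T then g i j else 0) := by
  have h : ∀ i ∈ (univ : Finset (Fin N)),
      ∑ j ∈ (univ : Finset (Fin N)).erase i, (if i ∈ T ∧ j ∈ T then g i j else 0)
        = if i ∈ T then ∑ j ∈ T.erase i, g i j else 0 := by
    intro i _
    by_cases hi : i ∈ T
    · simp only [hi, true_and, if_true]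
      rw [Finset.sum_ite_mem]
      congr 1
      ext j; simp [and_comm]
    · simp [hi]
  rw [Finset.sum_congr rfl h, Finset.sum_ite_mem, univ_inter]

private lemma sum_pair_swap (N m : ℕ) (hm : 2 ≤ m) (g : Fin N → Fin N → ℝ) :
    ∑ S ∈ Finset.powersetCard m (Finset.univ : Finset (Fin N)),
        ∑ i ∈ S, ∑ j ∈ S.erase i, g i j
      = ((N - 2).choose (m - 2) : ℝ) *
          ∑ i : Fin N, ∑ j ∈ (univ : Finset (Fin N)).erase i, g i j := by
  set P := Finset.powersetCard m (Finset.univ : Finset (Fin N)) with hP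
  calc ∑ S ∈ P, ∑ i ∈ S, ∑ j ∈ S.erase i, g i j
      = ∑ S ∈ P, ∑ i : Fin N, ∑ j ∈ (univ : Finset (Fin N)).erase i,
          (if i ∈ S ∧ j ∈ S then g i j else 0) := by
        exact Finset.sum_congr rfl fun S _ => double_sum_indicator N S g
    _ = ∑ i : Fin N, ∑ j ∈ (univ : Finset (Fin N)).erase i,
          ∑ S ∈ P, (if i ∈ S ∧ j ∈ S then g i j else 0) := by
        rw [Finset.sum_comm]
        exact Finset.sum_congr rfl fun i _ => Finset.sum_comm
    _ = ∑ i : Fin N, ∑ j ∈ (univ : Finset (Fin N)).erase i,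
          ((N - 2).choose (m - 2) : ℝ) * g i j := by
        refine Finset.sum_congr rfl fun i _ => Finset.sum_congr rfl fun j hj => ?_
        rw [← Finset.sum_filter, Finset.sum_const, nsmul_eq_mul,
          count_pair N m hm i j (Finset.ne_of_mem_erase hj)]
    _ = _ := by rw [Finset.mul_sum]; exact Finset.sum_congr rfl fun i _ => (Finset.mul_sum _ _ _).symm

private lemma sum_pair_compl_swap (N m : ℕ) (g : Fin N → Fin N → ℝ) :
    ∑ S ∈ Finset.powersetCard m (Finset.univ : Finset (Fin N)),
        ∑ i ∈ Sᶜ, ∑ j ∈ Sᶜ.erase i, g i j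
      = ((N - 2).choose m : ℝ) *
          ∑ i : Fin N, ∑ j ∈ (univ : Finset (Fin N)).erase i, g i j := by
  set P := Finset.powersetCard m (Finset.univ : Finset (Fin N)) with hP
  calc ∑ S ∈ P, ∑ i ∈ Sᶜ, ∑ j ∈ Sᶜ.erase i, g i j
      = ∑ S ∈ P, ∑ i : Fin N, ∑ j ∈ (univ : Finset (Fin N)).erase i,
          (if i ∈ Sᶜ ∧ j ∈ Sᶜ then g i j else 0) := by
        exact Finset.sum_congr rfl fun S _ => double_sum_indicator N Sᶜ g
    _ = ∑ i : Fin N, ∑ j ∈ (univ : Finset (Fin N)).erase i,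
          ∑ S ∈ P, (if i ∈ Sᶜ ∧ j ∈ Sᶜ then g i j else 0) := by
        rw [Finset.sum_comm]
        exact Finset.sum_congr rfl fun i _ => Finset.sum_comm
    _ = ∑ i : Fin N, ∑ j ∈ (univ : Finset (Fin N)).erase i,
          ((N - 2).choose m : ℝ) * g i j := by
        refine Finset.sum_congr rfl fun i _ => Finset.sum_congr rfl fun j hj => ?_
        rw [← Finset.sum_filter, Finset.sum_const, nsmul_eq_mul,
          count_pair_compl N m i j (Finset.ne_of_mem_erase hj)]
    _ = _ := by rw [Finset.mul_sum]; exact Finset.sum_congr rfl fun i _ => (Finset.mul_sum _ _ _).symm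

private lemma sum_quad_swap (N m : ℕ) (hm : 2 ≤ m) (k : Fin N → Fin N → ℝ) :
    ∑ S ∈ Finset.powersetCard m (Finset.univ : Finset (Fin N)),
        (∑ i ∈ S, ∑ j ∈ S.erase i, k i j) * (∑ u ∈ Sᶜ, ∑ v ∈ Sᶜ.erase u, k u v)
      = ((N - 4).choose (m - 2) : ℝ) *
          ∑ i : Fin N, ∑ j ∈ (univ : Finset (Fin N)).erase i,
            ∑ u ∈ ((univ : Finset (Fin N)).erase i).erase j,
              ∑ v ∈ (((univ : Finset (Fin N)).erase i).erase j).erase u, k i j * k u v := by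
  set P := Finset.powersetCard m (Finset.univ : Finset (Fin N)) with hP
  have step1 : ∀ S ∈ P,
      (∑ i ∈ S, ∑ j ∈ S.erase i, k i j) * (∑ u ∈ Sᶜ, ∑ v ∈ Sᶜ.erase u, k u v)
        = ∑ i : Fin N, ∑ j ∈ (univ : Finset (Fin N)).erase i,
            ∑ u : Fin N, ∑ v ∈ (univ : Finset (Fin N)).erase u,
              (if (i ∈ S ∧ j ∈ S) ∧ (u ∈ Sᶜ ∧ v ∈ Sᶜ) then k i j * k u v else 0) := by
    intro S _
    rw [double_sum_indicator N S k, double_sum_indicator N Sᶜ k]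
    rw [Finset.sum_mul_sum]
    refine Finset.sum_congr rfl fun i _ => ?_
    calc ∑ u : Fin N, (∑ j ∈ (univ : Finset (Fin N)).erase i,
            (if i ∈ S ∧ j ∈ S then k i j else 0)) *
            (∑ v ∈ (univ : Finset (Fin N)).erase u, (if u ∈ Sᶜ ∧ v ∈ Sᶜ then k u v else 0))
        = ∑ u : Fin N, ∑ j ∈ (univ : Finset (Fin N)).erase i,
            ∑ v ∈ (univ : Finset (Fin N)).erase u,
              (if i ∈ S ∧ j ∈ S then k i j else 0) * (if u ∈ Sᶜ ∧ v ∈ Sᶜ then k u v else 0) := by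
          exact Finset.sum_congr rfl fun u _ => Finset.sum_mul_sum _ _ _ _
      _ = ∑ j ∈ (univ : Finset (Fin N)).erase i, ∑ u : Fin N,
            ∑ v ∈ (univ : Finset (Fin N)).erase u,
              (if i ∈ S ∧ j ∈ S then k i j else 0) * (if u ∈ Sᶜ ∧ v ∈ Sᶜ then k u v else 0) := by
          exact Finset.sum_comm
      _ = _ := by
          refine Finset.sum_congr rfl fun j _ => Finset.sum_congr rfl fun u _ =>
            Finset.sum_congr rfl fun v _ => ?_
          rw [ite_zero_mul_ite_zero]
  rw [Finset.sum_congr rfl step1]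
  rw [Finset.sum_comm]
  have step3 : ∀ i : Fin N, ∀ j ∈ (univ : Finset (Fin N)).erase i,
      ∑ u : Fin N, ∑ v ∈ (univ : Finset (Fin N)).erase u,
          ∑ S ∈ P, (if (i ∈ S ∧ j ∈ S) ∧ (u ∈ Sᶜ ∧ v ∈ Sᶜ) then k i j * k u v else 0)
        = ∑ u ∈ ((univ : Finset (Fin N)).erase i).erase j,
            ∑ v ∈ (((univ : Finset (Fin N)).erase i).erase j).erase u,
              ((N - 4).choose (m - 2) : ℝ) * (k i j * k u v) := by
    intro i j hj
    have hji : j ≠ i := Finset.ne_of_mem_erase hj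
    have hcount : ∀ u v : Fin N,
        ∑ S ∈ P, (if (i ∈ S ∧ j ∈ S) ∧ (u ∈ Sᶜ ∧ v ∈ Sᶜ) then k i j * k u v else 0)
          = ((P.filter (fun S => (i ∈ S ∧ j ∈ S) ∧ (u ∈ Sᶜ ∧ v ∈ Sᶜ))).card : ℝ)
              * (k i j * k u v) := by
      intro u v
      rw [← Finset.sum_filter, Finset.sum_const, nsmul_eq_mul]
    have trimu : ∑ u : Fin N, ∑ v ∈ (univ : Finset (Fin N)).erase u,
        ∑ S ∈ P, (if (i ∈ S ∧ j ∈ S) ∧ (u ∈ Sᶜ ∧ v ∈ Sᶜ) then k i j * k u v else 0)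
        = ∑ u ∈ ((univ : Finset (Fin N)).erase i).erase j,
            ∑ v ∈ (univ : Finset (Fin N)).erase u,
            ∑ S ∈ P, (if (i ∈ S ∧ j ∈ S) ∧ (u ∈ Sᶜ ∧ v ∈ Sᶜ) then k i j * k u v else 0) := by
      refine (Finset.sum_subset (Finset.subset_univ _) ?_).symm
      intro u _ hu
      have : u = j ∨ u = i := by
        by_contra hc
        push_neg at hc
        exact hu (by simp [Finset.mem_erase, hc.1, hc.2])
      refine Finset.sum_eq_zero fun v _ => ?_
      rw [hcount, hP, count_quad_zero N m i j u v (by tauto)]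
      simp
    rw [trimu]
    refine Finset.sum_congr rfl fun u hu => ?_
    have hui : u ≠ i := by simp [Finset.mem_erase] at hu; tauto
    have huj : u ≠ j := by simp [Finset.mem_erase] at hu; tauto
    have trimv : ∑ v ∈ (univ : Finset (Fin N)).erase u,
        ∑ S ∈ P, (if (i ∈ S ∧ j ∈ S) ∧ (u ∈ Sᶜ ∧ v ∈ Sᶜ) then k i j * k u v else 0)
        = ∑ v ∈ (((univ : Finset (Fin N)).erase i).erase j).erase u,
            ∑ S ∈ P, (if (i ∈ S ∧ j ∈ S) ∧ (u ∈ Sᶜ ∧ v ∈ Sᶜ) then k i j * k u v else 0) := by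
      refine (Finset.sum_subset ?_ ?_).symm
      · intro x hx
        simp only [Finset.mem_erase, Finset.mem_univ, and_true] at hx ⊢
        tauto
      · intro v hv hv'
        have hvu : v ≠ u := Finset.ne_of_mem_erase hv
        have : v = i ∨ v = j := by
          simp only [Finset.mem_erase, Finset.mem_univ, and_true, not_and_or] at hv'
          tauto
        rw [hcount, hP, count_quad_zero N m i j u v (by tauto)]
        simp
    rw [trimv]
    refine Finset.sum_congr rfl fun v hv => ?_
    have hvu : v ≠ u := Finset.ne_of_mem_erase hv
    have hvi : v ≠ i := by simp [Finset.mem_erase] at hv; tauto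
    have hvj : v ≠ j := by simp [Finset.mem_erase] at hv; tauto
    rw [hcount, hP, count_quad N m hm i j u v hji hvu hui huj hvi hvj]
  calc ∑ i : Fin N, ∑ S ∈ P, ∑ j ∈ (univ : Finset (Fin N)).erase i,
          ∑ u : Fin N, ∑ v ∈ (univ : Finset (Fin N)).erase u,
            (if (i ∈ S ∧ j ∈ S) ∧ (u ∈ Sᶜ ∧ v ∈ Sᶜ) then k i j * k u v else 0)
      = ∑ i : Fin N, ∑ j ∈ (univ : Finset (Fin N)).erase i, ∑ S ∈ P,
          ∑ u : Fin N, ∑ v ∈ (univ : Finset (Fin N)).erase u,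
            (if (i ∈ S ∧ j ∈ S) ∧ (u ∈ Sᶜ ∧ v ∈ Sᶜ) then k i j * k u v else 0) := by
        exact Finset.sum_congr rfl fun i _ => Finset.sum_comm
    _ = ∑ i : Fin N, ∑ j ∈ (univ : Finset (Fin N)).erase i,
          ∑ u : Fin N, ∑ S ∈ P, ∑ v ∈ (univ : Finset (Fin N)).erase u,
            (if (i ∈ S ∧ j ∈ S) ∧ (u ∈ Sᶜ ∧ v ∈ Sᶜ) then k i j * k u v else 0) := by
        exact Finset.sum_congr rfl fun i _ => Finset.sum_congr rfl fun j _ => Finset.sum_comm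
    _ = ∑ i : Fin N, ∑ j ∈ (univ : Finset (Fin N)).erase i,
          ∑ u : Fin N, ∑ v ∈ (univ : Finset (Fin N)).erase u, ∑ S ∈ P,
            (if (i ∈ S ∧ j ∈ S) ∧ (u ∈ Sᶜ ∧ v ∈ Sᶜ) then k i j * k u v else 0) := by
        exact Finset.sum_congr rfl fun i _ => Finset.sum_congr rfl fun j _ =>
          Finset.sum_congr rfl fun u _ => Finset.sum_comm
    _ = ∑ i : Fin N, ∑ j ∈ (univ : Finset (Fin N)).erase i,
          ∑ u ∈ ((univ : Finset (Fin N)).erase i).erase j,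
            ∑ v ∈ (((univ : Finset (Fin N)).erase i).erase j).erase u,
              ((N - 4).choose (m - 2) : ℝ) * (k i j * k u v) := by
        exact Finset.sum_congr rfl fun i _ => Finset.sum_congr rfl fun j hj => step3 i j hj
    _ = _ := by
        rw [Finset.mul_sum]
        refine Finset.sum_congr rfl fun i _ => ?_
        rw [Finset.mul_sum]
        refine Finset.sum_congr rfl fun j _ => ?_
        rw [Finset.mul_sum]
        refine Finset.sum_congr rfl fun u _ => ?_
        rw [Finset.mul_sum]

private lemma nat_id2 (m' N'' : ℕ) :
    (N''+2).choose (m'+2) * ((m'+2)*(m'+1)) = N''.choose m' * ((N''+2)*(N''+1)) := by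
  have h1 := Nat.add_one_mul_choose_eq N'' m'
  have h2 := Nat.add_one_mul_choose_eq (N''+1) (m'+1)
  nlinarith [h1, h2]

private lemma nat_idA (m n : ℕ) (hm : 2 ≤ m) (hn : 2 ≤ n) :
    (m+n).choose m * (m*(m-1)) = (m+n-2).choose (m-2) * ((m+n)*(m+n-1)) := by
  have h := nat_id2 (m-2) (m+n-2)
  have e1 : m - 2 + 2 = m := by omega
  have e2 : m + n - 2 + 2 = m + n := by omega
  have e3 : m - 2 + 1 = m - 1 := by omega
  have e4 : m + n - 2 + 1 = m + n - 1 := by omega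
  rw [e1, e2, e3, e4] at h
  exact h

private lemma nat_idB (m n : ℕ) (hm : 2 ≤ m) (hn : 2 ≤ n) :
    (m+n).choose m * (n*(n-1)) = (m+n-2).choose m * ((m+n)*(m+n-1)) := by
  have h := nat_idA n m hn hm
  have e0 : n + m = m + n := by omega
  rw [e0] at h
  have hsym1 : (m+n).choose n = (m+n).choose m := by
    rw [← Nat.choose_symm (by omega : n ≤ m + n)]
    congr 1
    omega
  have hsym2 : (m+n-2).choose (n-2) = (m+n-2).choose m := by
    rw [← Nat.choose_symm (by omega : n - 2 ≤ m + n - 2)]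
    congr 1
    omega
  rw [hsym1, hsym2] at h
  exact h

private lemma nat_idC (m n : ℕ) (hm : 2 ≤ m) (hn : 2 ≤ n) :
    (m+n).choose m * (m*(m-1)*(n*(n-1)))
      = (m+n-4).choose (m-2) * ((m+n)*((m+n-1)*((m+n-2)*(m+n-3)))) := by
  have h2 := nat_idA m n hm hn
  have h3 : (m+n-3).choose (m-2) * (m+n-2) = (m+n-2).choose (m-2) * n := by
    have := Nat.choose_mul_succ_eq (m+n-3) (m-2)
    have e1 : m + n - 3 + 1 = m + n - 2 := by omega
    have e2 : m + n - 2 - (m - 2) = n := by omega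
    rw [e1, e2] at this
    exact this
  have h4 : (m+n-4).choose (m-2) * (m+n-3) = (m+n-3).choose (m-2) * (n-1) := by
    have := Nat.choose_mul_succ_eq (m+n-4) (m-2)
    have e1 : m + n - 4 + 1 = m + n - 3 := by omega
    have e2 : m + n - 3 - (m - 2) = n - 1 := by omega
    rw [e1, e2] at this
    exact this
  calc (m+n).choose m * (m*(m-1)*(n*(n-1)))
      = ((m+n).choose m * (m*(m-1))) * (n*(n-1)) := by ring
    _ = ((m+n-2).choose (m-2) * ((m+n)*(m+n-1))) * (n*(n-1)) := by rw [h2]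
    _ = ((m+n-2).choose (m-2) * n) * ((m+n)*(m+n-1)*(n-1)) := by ring
    _ = ((m+n-3).choose (m-2) * (m+n-2)) * ((m+n)*(m+n-1)*(n-1)) := by rw [h3]
    _ = ((m+n-3).choose (m-2) * (n-1)) * ((m+n)*(m+n-1)*(m+n-2)) := by ring
    _ = ((m+n-4).choose (m-2) * (m+n-3)) * ((m+n)*(m+n-1)*(m+n-2)) := by rw [h4]
    _ = _ := by ring

private lemma pcov_eq' (N m : ℕ) (hm : m ≤ N) (f g : Finset (Fin N) → ℝ) :
    pcov N m f g = pexp N m (fun S => f S * g S) - pexp N m f * pexp N m g := by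
  have hc : (0:ℝ) < (N.choose m : ℝ) := by exact_mod_cast Nat.choose_pos hm
  have hc' : (N.choose m : ℝ) ≠ 0 := ne_of_gt hc
  set P := Finset.powersetCard m (Finset.univ : Finset (Fin N)) with hP
  have hcard : (P.card : ℝ) = (N.choose m : ℝ) := by
    rw [hP, card_powersetCard, card_univ, Fintype.card_fin]
  set A := pexp N m f with hA
  set B := pexp N m g with hB
  have hsum : ∑ S ∈ P, (f S - A) * (g S - B)
      = (∑ S ∈ P, f S * g S) - A * (∑ S ∈ P, g S) - B * (∑ S ∈ P, f S)
        + P.card * (A * B) := by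
    rw [Finset.mul_sum, Finset.mul_sum]
    rw [← Finset.sum_sub_distrib, ← Finset.sum_sub_distrib]
    rw [← nsmul_eq_mul, ← Finset.sum_const, ← Finset.sum_add_distrib]
    exact Finset.sum_congr rfl fun S _ => by ring
  have hAe : A = (∑ S ∈ P, f S) / (N.choose m : ℝ) := rfl
  have hBe : B = (∑ S ∈ P, g S) / (N.choose m : ℝ) := rfl
  show (∑ S ∈ P, (f S - A) * (g S - B)) / (N.choose m : ℝ) = _
  rw [hsum, hcard, hAe, hBe]
  show _ = (∑ S ∈ P, f S * g S) / (N.choose m : ℝ) - _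
  field_simp
  ring

private lemma Ealpha (m n : ℕ) (hm : 2 ≤ m) (hn : 2 ≤ n) (k : Fin (m+n) → Fin (m+n) → ℝ) :
    pexp (m+n) m (alphaStat (m+n) m k) = kbar (m+n) k := by
  obtain ⟨a, rfl⟩ : ∃ a, m = a + 2 := ⟨m - 2, by omega⟩
  obtain ⟨b, rfl⟩ : ∃ b, n = b + 2 := ⟨n - 2, by omega⟩
  have key := sum_pair_swap (a+2+(b+2)) (a+2) (by omega) k
  have e2 : a+2+(b+2) - 2 = a+b+2 := by omega
  have e3 : (a+2) - 2 = a := by omega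
  rw [e2, e3] at key
  have hch : ((a+2+(b+2)).choose (a+2) : ℝ) ≠ 0 := by
    exact_mod_cast (Nat.choose_pos (by omega)).ne'
  have hid := nat_idA (a+2) (b+2) (by omega) (by omega)
  have e1 : (a+2) - 1 = a+1 := by omega
  have e4 : a+2+(b+2) - 1 = a+b+3 := by omega
  rw [e1, e2, e3, e4] at hid
  have h' := congrArg (Nat.cast : ℕ → ℝ) hid
  push_cast at h'
  unfold pexp alphaStat kbar
  rw [← Finset.mul_sum, key]
  set T := ∑ i : Fin (a+2+(b+2)), ∑ j ∈ (univ : Finset (Fin (a+2+(b+2)))).erase i, k i j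
  push_cast at hch ⊢
  ring_nf
  ring_nf at h' hch
  have hz5 : (2 + (a:ℝ)*3 + (a:ℝ)^2) ≠ 0 := by positivity
  have hz6 : (12 + (a:ℝ)*7 + (a:ℝ)*(b:ℝ)*2 + (a:ℝ)^2 + (b:ℝ)*7 + (b:ℝ)^2) ≠ 0 := by positivity
  field_simp
  linear_combination (-T) * h'

private lemma Ebeta (m n : ℕ) (hm : 2 ≤ m) (hn : 2 ≤ n) (k : Fin (m+n) → Fin (m+n) → ℝ) :
    pexp (m+n) m (betaStat (m+n) n k) = kbar (m+n) k := by
  obtain ⟨a, rfl⟩ : ∃ a, m = a + 2 := ⟨m - 2, by omega⟩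
  obtain ⟨b, rfl⟩ : ∃ b, n = b + 2 := ⟨n - 2, by omega⟩
  have key := sum_pair_compl_swap (a+2+(b+2)) (a+2) k
  have e2 : a+2+(b+2) - 2 = a+b+2 := by omega
  rw [e2] at key
  have hch : ((a+2+(b+2)).choose (a+2) : ℝ) ≠ 0 := by
    exact_mod_cast (Nat.choose_pos (by omega)).ne'
  have hid := nat_idB (a+2) (b+2) (by omega) (by omega)
  have e1 : (b+2) - 1 = b+1 := by omega
  have e4 : a+2+(b+2) - 1 = a+b+3 := by omega
  rw [e1, e2, e4] at hid
  have h' := congrArg (Nat.cast : ℕ → ℝ) hid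
  push_cast at h'
  unfold pexp betaStat kbar
  rw [← Finset.mul_sum, key]
  set T := ∑ i : Fin (a+2+(b+2)), ∑ j ∈ (univ : Finset (Fin (a+2+(b+2)))).erase i, k i j
  push_cast at hch ⊢
  ring_nf
  ring_nf at h' hch
  have hz5 : (2 + (b:ℝ)*3 + (b:ℝ)^2) ≠ 0 := by positivity
  have hz6 : (12 + (a:ℝ)*7 + (a:ℝ)*(b:ℝ)*2 + (a:ℝ)^2 + (b:ℝ)*7 + (b:ℝ)^2) ≠ 0 := by positivity
  field_simp
  linear_combination (-T) * h'

set_option maxHeartbeats 2000000 in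
private lemma EalphaBeta (m n : ℕ) (hm : 2 ≤ m) (hn : 2 ≤ n) (k : Fin (m+n) → Fin (m+n) → ℝ) :
    pexp (m+n) m (fun S => alphaStat (m+n) m k S * betaStat (m+n) n k S)
      = kC (m+n) k / (((m:ℝ)+(n:ℝ)) * (((m:ℝ)+(n:ℝ))-1) * (((m:ℝ)+(n:ℝ))-2) * (((m:ℝ)+(n:ℝ))-3)) := by
  obtain ⟨a, rfl⟩ : ∃ a, m = a + 2 := ⟨m - 2, by omega⟩
  obtain ⟨b, rfl⟩ : ∃ b, n = b + 2 := ⟨n - 2, by omega⟩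
  have key := sum_quad_swap (a+2+(b+2)) (a+2) (by omega) k
  have e2 : a+2+(b+2) - 4 = a+b := by omega
  have e3 : (a+2) - 2 = a := by omega
  rw [e2, e3] at key
  have hch : ((a+2+(b+2)).choose (a+2) : ℝ) ≠ 0 := by
    exact_mod_cast (Nat.choose_pos (by omega)).ne'
  have hid := nat_idC (a+2) (b+2) (by omega) (by omega)
  have f1 : (a+2) - 1 = a+1 := by omega
  have f2 : (b+2) - 1 = b+1 := by omega
  have f3 : a+2+(b+2) - 1 = a+b+3 := by omega
  have f4 : a+2+(b+2) - 2 = a+b+2 := by omega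
  have f5 : a+2+(b+2) - 3 = a+b+1 := by omega
  rw [f1, f2, f3, f4, f5, e2, e3] at hid
  have h' := congrArg (Nat.cast : ℕ → ℝ) hid
  push_cast at h'
  have hprod : ∀ S, alphaStat (a+2+(b+2)) (a+2) k S * betaStat (a+2+(b+2)) (b+2) k S
      = ((((a+2:ℕ):ℝ) * (((a+2:ℕ):ℝ)-1))⁻¹ * (((b+2:ℕ):ℝ) * (((b+2:ℕ):ℝ)-1))⁻¹)
        * ((∑ i ∈ S, ∑ j ∈ S.erase i, k i j) * (∑ u ∈ Sᶜ, ∑ v ∈ Sᶜ.erase u, k u v)) := by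
    intro S
    unfold alphaStat betaStat
    ring
  unfold pexp
  rw [Finset.sum_congr rfl (fun S _ => hprod S), ← Finset.mul_sum, key]
  have hQ : ∑ i : Fin (a+2+(b+2)), ∑ j ∈ (univ : Finset (Fin (a+2+(b+2)))).erase i,
      ∑ u ∈ ((univ : Finset (Fin (a+2+(b+2)))).erase i).erase j,
        ∑ v ∈ (((univ : Finset (Fin (a+2+(b+2)))).erase i).erase j).erase u, k i j * k u v
      = kC (a+2+(b+2)) k := rfl
  rw [hQ]
  set Q := kC (a+2+(b+2)) k
  push_cast at hch ⊢
  ring_nf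
  ring_nf at h' hch
  have hz5 : (2 + (a:ℝ)*3 + (a:ℝ)^2) ≠ 0 := by positivity
  have hz6 : (2 + (b:ℝ)*3 + (b:ℝ)^2) ≠ 0 := by positivity
  have hz7 : ((a:ℝ)+(b:ℝ)+4) ≠ 0 := by positivity
  have hz8 : ((a:ℝ)+(b:ℝ)+3) ≠ 0 := by positivity
  have hz9 : ((a:ℝ)+(b:ℝ)+2) ≠ 0 := by positivity
  have hz10 : ((a:ℝ)+(b:ℝ)+1) ≠ 0 := by positivity
  field_simp
  linear_combination (-Q) * h'
/-- Under the permutation null, `cov(α, β) = C/(N(N−1)(N−2)(N−3)) − k̄²`. -/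
theorem covariance_alpha_beta (m n : ℕ) (hm : 2 ≤ m) (hn : 2 ≤ n)
    (k : Fin (m + n) → Fin (m + n) → ℝ) (hsym : ∀ i j, k i j = k j i) :
    pcov (m + n) m (alphaStat (m + n) m k) (betaStat (m + n) n k) =
      kC (m + n) k / (((m : ℝ) + (n : ℝ)) * (((m : ℝ) + (n : ℝ)) - 1) * (((m : ℝ) + (n : ℝ)) - 2) * (((m : ℝ) + (n : ℝ)) - 3)) - (kbar (m + n) k) ^ 2 := by
  have h := pcov_eq' (m+n) m (Nat.le_add_right m n) (alphaStat (m+n) m k) (betaStat (m+n) n k)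
  rw [h, Ealpha m n hm hn k, Ebeta m n hm hn k, EalphaBeta m n hm hn k]
  ring

end CovAux
end

section
/- Let m, n ≥ 2. If the kernel entries satisfy neither corner case (C1) nor corner case (C2), where (C1) is: Σ_{j≠i} k_{ij} is the same for all i = 1,…,N, and (C2) is: Σ_{j≠i} k_{ij} − (N−2)k_{iN} is the same for all i = 1,…,N−1, then the 2×2 covariance matrix Σ_{α,β} = var((α,β)ᵀ) under the permutation null distribution is invertible (so the statistic GPK = (α−E(α), β−E(β)) Σ_{α,β}^{−1} (α−E(α), β−E(β))ᵀ is well-defined). -/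
open Finset Matrix Asymptotics

section AuxGPK
variable {N : ℕ}

lemma aux_sigma_insert (k : Fin N → Fin N → ℝ) (hsym : ∀ i j, k i j = k j i)
    {R : Finset (Fin N)} {i : Fin N} (hi : i ∉ R) :
    (∑ x ∈ insert i R, ∑ y ∈ (insert i R).erase x, k x y)
      = (∑ x ∈ R, ∑ y ∈ R.erase x, k x y) + 2 * ∑ t ∈ R, k i t := by
  rw [Finset.sum_insert hi, Finset.erase_insert hi]
  have h1 : ∀ x ∈ R, (∑ y ∈ (insert i R).erase x, k x y)
      = k x i + ∑ y ∈ R.erase x, k x y := by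
    intro x hx
    have hxi : x ≠ i := by rintro rfl; exact hi hx
    rw [Finset.erase_insert_of_ne hxi.symm, Finset.sum_insert (by simp [hi])]
  rw [Finset.sum_congr rfl h1, Finset.sum_add_distrib]
  have h2 : ∑ x ∈ R, k x i = ∑ x ∈ R, k i x := Finset.sum_congr rfl (fun x _ => hsym x i)
  rw [h2]; ring

lemma aux_compl_insert {i j : Fin N} (hij : i ≠ j) {R : Finset (Fin N)}
    (hR : R ⊆ ({i, j} : Finset (Fin N))ᶜ) :
    (insert i R)ᶜ = insert j (({i, j} : Finset (Fin N))ᶜ \ R) := by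
  ext x
  have hx : x ∈ R → x ≠ i ∧ x ≠ j := by
    intro hxR
    have := hR hxR
    simp only [Finset.mem_compl, Finset.mem_insert, Finset.mem_singleton, not_or] at this
    exact this
  simp only [Finset.mem_compl, Finset.mem_insert, Finset.mem_singleton, Finset.mem_sdiff, not_or]
  constructor
  · rintro ⟨h1, h2⟩
    by_cases hxj : x = j
    · exact Or.inl hxj
    · exact Or.inr ⟨⟨h1, hxj⟩, h2⟩
  · rintro (rfl | ⟨⟨h1, h2⟩, h3⟩)
    · exact ⟨hij.symm, fun hxR => (hx hxR).2 rfl⟩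
    · exact ⟨h1, h3⟩

lemma aux_sum_compl_pair (k : Fin N → Fin N → ℝ) (hsym : ∀ i j, k i j = k j i)
    {i j : Fin N} (hij : i ≠ j) :
    ∑ t ∈ ({i, j} : Finset (Fin N))ᶜ, (k i t - k j t)
      = (∑ t ∈ (Finset.univ : Finset (Fin N)).erase i, k i t)
        - (∑ t ∈ (Finset.univ : Finset (Fin N)).erase j, k j t) := by
  have hTi : ({i, j} : Finset (Fin N))ᶜ = ((Finset.univ : Finset (Fin N)).erase i).erase j := by
    ext x
    simp only [Finset.mem_compl, Finset.mem_insert, Finset.mem_singleton, not_or, Finset.mem_erase, Finset.mem_univ,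
      and_true]
    try tauto
  have hTj : ({i, j} : Finset (Fin N))ᶜ = ((Finset.univ : Finset (Fin N)).erase j).erase i := by
    ext x
    simp only [Finset.mem_compl, Finset.mem_insert, Finset.mem_singleton, not_or, Finset.mem_erase, Finset.mem_univ,
      and_true]
    try tauto
  rw [Finset.sum_sub_distrib]
  rw [show ∑ t ∈ ({i, j} : Finset (Fin N))ᶜ, k i t
      = ∑ t ∈ (Finset.univ : Finset (Fin N)).erase i, k i t - k i j by
    rw [hTi, Finset.sum_erase_eq_sub (by simp [Ne.symm hij])]]
  rw [show ∑ t ∈ ({i, j} : Finset (Fin N))ᶜ, k j t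
      = ∑ t ∈ (Finset.univ : Finset (Fin N)).erase j, k j t - k j i by
    rw [hTj, Finset.sum_erase_eq_sub (by simp [hij])]]
  rw [hsym i j]; ring

lemma aux_swap (m : ℕ) (hm1 : 1 ≤ m)
    (k : Fin N → Fin N → ℝ) (hsym : ∀ i j, k i j = k j i)
    (A B c : ℝ)
    (hconst : ∀ S ∈ Finset.powersetCard m (Finset.univ : Finset (Fin N)),
        A * (∑ x ∈ S, ∑ y ∈ S.erase x, k x y)
          + B * (∑ x ∈ Sᶜ, ∑ y ∈ Sᶜ.erase x, k x y) = c)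
    {i j : Fin N} (hij : i ≠ j) {R : Finset (Fin N)}
    (hR : R ⊆ ({i, j} : Finset (Fin N))ᶜ) (hcard : R.card = m - 1) :
    A * (∑ t ∈ R, (k i t - k j t))
      = B * (∑ t ∈ (({i, j} : Finset (Fin N))ᶜ \ R), (k i t - k j t)) := by
  set T := ({i, j} : Finset (Fin N))ᶜ with hT
  set Q := T \ R with hQ
  have hmem : ∀ x ∈ R, x ≠ i ∧ x ≠ j := by
    intro x hxR
    have := hR hxR
    simp only [hT, Finset.mem_compl, Finset.mem_insert, Finset.mem_singleton, not_or] at this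
    exact this
  have hiR : i ∉ R := fun h => (hmem i h).1 rfl
  have hjR : j ∉ R := fun h => (hmem j h).2 rfl
  have hiT : i ∉ T := by simp [hT]
  have hjT : j ∉ T := by simp [hT]
  have hiQ : i ∉ Q := fun h => hiT (Finset.mem_sdiff.1 h).1
  have hjQ : j ∉ Q := fun h => hjT (Finset.mem_sdiff.1 h).1
  have hR' : R ⊆ ({j, i} : Finset (Fin N))ᶜ := by
    intro x hxR; simp only [Finset.mem_compl, Finset.mem_insert, Finset.mem_singleton, not_or]
    exact ⟨(hmem x hxR).2, (hmem x hxR).1⟩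
  have hQ' : ({j, i} : Finset (Fin N))ᶜ = T := by
    simp only [hT]; congr 1; ext x; simp only [Finset.mem_insert, Finset.mem_singleton]; tauto
  have hcard1 : (insert i R).card = m := by
    rw [Finset.card_insert_of_notMem hiR, hcard]; omega
  have hcard2 : (insert j R).card = m := by
    rw [Finset.card_insert_of_notMem hjR, hcard]; omega
  have hc1 : (insert i R)ᶜ = insert j Q := aux_compl_insert hij hR
  have hc2 : (insert j R)ᶜ = insert i Q := by
    have := aux_compl_insert hij.symm hR'
    rw [this, hQ']
  have e1 := hconst (insert i R) (Finset.mem_powersetCard_univ.2 hcard1)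
  have e2 := hconst (insert j R) (Finset.mem_powersetCard_univ.2 hcard2)
  rw [hc1, aux_sigma_insert k hsym hiR, aux_sigma_insert k hsym hjQ] at e1
  rw [hc2, aux_sigma_insert k hsym hjR, aux_sigma_insert k hsym hiQ] at e2
  rw [Finset.sum_sub_distrib, Finset.sum_sub_distrib]
  linarith

end AuxGPK

/-- If neither corner case (C1) nor (C2) holds, the 2×2 permutation-null covariance
matrix `Σ_{α,β}` is invertible, so GPK is well-defined. -/
theorem gpk_well_defined (m n : ℕ) (hm : 2 ≤ m) (hn : 2 ≤ n)
    (k : Fin (m + n) → Fin (m + n) → ℝ) (hsym : ∀ i j, k i j = k j i)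
    (hC1 : ¬ ∀ i i' : Fin (m + n), (∑ j ∈ (Finset.univ : Finset (Fin (m + n))).erase i, k i j) = (∑ j ∈ (Finset.univ : Finset (Fin (m + n))).erase i', k i' j))
    (hC2 : ¬ ∀ i i' : Fin (m + n), i ≠ (⟨m + n - 1, by omega⟩ : Fin (m + n)) → i' ≠ (⟨m + n - 1, by omega⟩ : Fin (m + n)) →
      (∑ j ∈ (Finset.univ : Finset (Fin (m + n))).erase i, k i j) - (((m : ℝ) + (n : ℝ)) - 2) * k i (⟨m + n - 1, by omega⟩ : Fin (m + n))
        = (∑ j ∈ (Finset.univ : Finset (Fin (m + n))).erase i', k i' j) - (((m : ℝ) + (n : ℝ)) - 2) * k i' (⟨m + n - 1, by omega⟩ : Fin (m + n))) :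
    IsUnit (!![pvar (m + n) m (alphaStat (m + n) m k), pcov (m + n) m (alphaStat (m + n) m k) (betaStat (m + n) n k);
       pcov (m + n) m (alphaStat (m + n) m k) (betaStat (m + n) n k), pvar (m + n) m (betaStat (m + n) n k)]) := by
  have hmn : 2 ≤ m + n := by omega
  set P := Finset.powersetCard m (Finset.univ : Finset (Fin (m + n))) with hPdef
  rw [Matrix.isUnit_iff_isUnit_det, Matrix.det_fin_two_of, isUnit_iff_ne_zero]
  intro hdet
  have hM0 : (0:ℝ) < ((m + n).choose m : ℝ) := by
    exact_mod_cast Nat.choose_pos (by omega : m ≤ m + n)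
  have hpvar : ∀ f : Finset (Fin (m + n)) → ℝ,
      pvar (m + n) m f = (∑ S ∈ P, (f S - pexp (m + n) m f)^2) / ((m + n).choose m : ℝ) :=
    fun f => rfl
  have hpcov : ∀ f g : Finset (Fin (m + n)) → ℝ,
      pcov (m + n) m f g = (∑ S ∈ P, (f S - pexp (m + n) m f) * (g S - pexp (m + n) m g))
        / ((m + n).choose m : ℝ) := fun f g => rfl
  rw [hpvar, hpvar, hpcov] at hdet
  set Ea := pexp (m + n) m (alphaStat (m + n) m k) with hEa
  set Eb := pexp (m + n) m (betaStat (m + n) n k) with hEb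
  set Su : ℝ := ∑ S ∈ P, (alphaStat (m + n) m k S - Ea)^2 with hSu
  set Sv : ℝ := ∑ S ∈ P, (betaStat (m + n) n k S - Eb)^2 with hSv
  set Suv : ℝ := ∑ S ∈ P, (alphaStat (m + n) m k S - Ea) * (betaStat (m + n) n k S - Eb)
    with hSuv
  have hCS : Su * Sv = Suv * Suv := by
    have hM : ((m + n).choose m : ℝ) ≠ 0 := ne_of_gt hM0
    field_simp at hdet
    linarith
  -- extract a nontrivial vanishing linear combination
  obtain ⟨a, b, hab, hcomb⟩ : ∃ a b : ℝ, (a ≠ 0 ∨ b ≠ 0) ∧ ∀ S ∈ P,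
      a * (alphaStat (m + n) m k S - Ea) + b * (betaStat (m + n) n k S - Eb) = 0 := by
    by_cases hv : Sv = 0
    · refine ⟨0, 1, Or.inr one_ne_zero, fun S hS => ?_⟩
      have h0 := (Finset.sum_eq_zero_iff_of_nonneg
        (fun S _ => sq_nonneg (betaStat (m + n) n k S - Eb))).1 hv.symm.symm S hS
      have h1 : betaStat (m + n) n k S - Eb = 0 := by
        have := sq_eq_zero_iff.1 h0
        exact this
      rw [h1]; ring
    · refine ⟨Sv, -Suv, Or.inl hv, fun S hS => ?_⟩
      have hw : ∑ S ∈ P, (Sv * (alphaStat (m + n) m k S - Ea)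
          - Suv * (betaStat (m + n) n k S - Eb))^2 = 0 := by
        have hexp : ∀ S ∈ P, (Sv * (alphaStat (m + n) m k S - Ea)
            - Suv * (betaStat (m + n) n k S - Eb))^2
            = Sv^2 * (alphaStat (m + n) m k S - Ea)^2
              - 2*Sv*Suv*((alphaStat (m + n) m k S - Ea) * (betaStat (m + n) n k S - Eb))
              + Suv^2 * (betaStat (m + n) n k S - Eb)^2 := fun S _ => by ring
        rw [Finset.sum_congr rfl hexp]
        rw [Finset.sum_add_distrib, Finset.sum_sub_distrib,
          ← Finset.mul_sum, ← Finset.mul_sum, ← Finset.mul_sum, ← hSu, ← hSuv, ← hSv]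
        linear_combination Sv * hCS
      have h0 := (Finset.sum_eq_zero_iff_of_nonneg (fun S _ => sq_nonneg _)).1 hw S hS
      have h1 := sq_eq_zero_iff.1 h0
      linarith
  -- pass to raw double sums
  have hcαnz : ((m:ℝ) * ((m:ℝ) - 1)) ≠ 0 := by
    have h2 : (2:ℝ) ≤ (m:ℝ) := by exact_mod_cast hm
    nlinarith
  have hcβnz : ((n:ℝ) * ((n:ℝ) - 1)) ≠ 0 := by
    have h2 : (2:ℝ) ≤ (n:ℝ) := by exact_mod_cast hn
    nlinarith
  set A : ℝ := a * ((m:ℝ) * ((m:ℝ) - 1))⁻¹ with hA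
  set B : ℝ := b * ((n:ℝ) * ((n:ℝ) - 1))⁻¹ with hB
  set c : ℝ := a * Ea + b * Eb with hc
  have hconst : ∀ S ∈ P,
      A * (∑ x ∈ S, ∑ y ∈ S.erase x, k x y)
        + B * (∑ x ∈ Sᶜ, ∑ y ∈ Sᶜ.erase x, k x y) = c := by
    intro S hS
    have h := hcomb S hS
    unfold alphaStat betaStat at h
    rw [hA, hB, hc]
    linarith
  have hABnz : A ≠ 0 ∨ B ≠ 0 := by
    rcases hab with ha | hb
    · exact Or.inl (mul_ne_zero ha (inv_ne_zero hcαnz))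
    · exact Or.inr (mul_ne_zero hb (inv_ne_zero hcβnz))
  have hTcard : ∀ {i i' : Fin (m + n)}, i ≠ i' →
      (({i, i'} : Finset (Fin (m + n)))ᶜ).card = m + n - 2 := by
    intro i i' hne
    rw [Finset.card_compl, Finset.card_pair hne, Fintype.card_fin]
  by_cases hAB : A + B = 0
  · -- corner case C1
    have hA0 : A ≠ 0 := by
      rcases hABnz with h | h
      · exact h
      · intro h0; apply h; linarith
    apply hC1
    intro i i'
    rcases eq_or_ne i i' with rfl | hne
    · rfl
    obtain ⟨R, hRsub, hRcard⟩ := Finset.exists_subset_card_eq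
      (show m - 1 ≤ (({i, i'} : Finset (Fin (m + n)))ᶜ).card by rw [hTcard hne]; omega)
    have hrel := aux_swap m (by omega) k hsym A B c hconst hne hRsub hRcard
    rw [Finset.sum_sdiff_eq_sub hRsub] at hrel
    have hzero : A * ∑ t ∈ ({i, i'} : Finset (Fin (m + n)))ᶜ, (k i t - k i' t) = 0 := by
      linear_combination hrel + ((∑ t ∈ ({i, i'} : Finset (Fin (m + n)))ᶜ, (k i t - k i' t))
        - ∑ t ∈ R, (k i t - k i' t)) * hAB
    have hD := (mul_eq_zero.1 hzero).resolve_left hA0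
    rw [aux_sum_compl_pair k hsym hne] at hD
    linarith
  · -- corner case C2
    apply hC2
    have key : ∀ (eidx i i' : Fin (m + n)), i ≠ eidx → i' ≠ eidx →
        (∑ j ∈ (Finset.univ : Finset (Fin (m + n))).erase i, k i j)
          - (((m : ℝ) + (n : ℝ)) - 2) * k i eidx
        = (∑ j ∈ (Finset.univ : Finset (Fin (m + n))).erase i', k i' j)
          - (((m : ℝ) + (n : ℝ)) - 2) * k i' eidx := by
      intro eidx i i' hie hi'e
      rcases eq_or_ne i i' with rfl | hne
      · rfl
      set T := ({i, i'} : Finset (Fin (m + n)))ᶜ with hT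
      have heT : eidx ∈ T := by
        simp only [hT, Finset.mem_compl, Finset.mem_insert, Finset.mem_singleton, not_or]
        exact ⟨Ne.symm hie, Ne.symm hi'e⟩
      have hdconst : ∀ t ∈ T, k i t - k i' t = k i eidx - k i' eidx := by
        intro t ht
        rcases eq_or_ne t eidx with rfl | hte
        · rfl
        have heT' : eidx ∈ T.erase t := Finset.mem_erase.2 ⟨Ne.symm hte, heT⟩
        obtain ⟨R', hR'sub, hR'card⟩ := Finset.exists_subset_card_eq
          (show m - 2 ≤ ((T.erase t).erase eidx).card by
            rw [Finset.card_erase_of_mem heT', Finset.card_erase_of_mem ht, hTcard hne]; omega)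
        have hR'T : R' ⊆ T := fun x hx =>
          Finset.mem_of_mem_erase (Finset.mem_of_mem_erase (hR'sub hx))
        have htR' : t ∉ R' := fun h =>
          (Finset.mem_erase.1 (Finset.mem_of_mem_erase (hR'sub h))).1 rfl
        have heR' : eidx ∉ R' := fun h => (Finset.mem_erase.1 (hR'sub h)).1 rfl
        have hsub1 : insert t R' ⊆ T := Finset.insert_subset ht hR'T
        have hsub2 : insert eidx R' ⊆ T := Finset.insert_subset heT hR'T
        have hcard1 : (insert t R').card = m - 1 := by
          rw [Finset.card_insert_of_notMem htR', hR'card]; omega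
        have hcard2 : (insert eidx R').card = m - 1 := by
          rw [Finset.card_insert_of_notMem heR', hR'card]; omega
        have rel1 := aux_swap m (by omega) k hsym A B c hconst hne hsub1 hcard1
        have rel2 := aux_swap m (by omega) k hsym A B c hconst hne hsub2 hcard2
        rw [Finset.sum_sdiff_eq_sub hsub1, Finset.sum_insert htR'] at rel1
        rw [Finset.sum_sdiff_eq_sub hsub2, Finset.sum_insert heR'] at rel2
        have hfin : (A + B) * ((k i t - k i' t) - (k i eidx - k i' eidx)) = 0 := by
          linear_combination rel1 - rel2
        have := (mul_eq_zero.1 hfin).resolve_left hAB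
        linarith
      have hsum : ∑ t ∈ T, (k i t - k i' t) = (T.card : ℝ) * (k i eidx - k i' eidx) := by
        rw [Finset.sum_congr rfl hdconst, Finset.sum_const, nsmul_eq_mul]
      rw [aux_sum_compl_pair k hsym hne] at hsum
      have hTcardR : ((T.card : ℕ) : ℝ) = (m:ℝ) + (n:ℝ) - 2 := by
        rw [hT, hTcard hne, Nat.cast_sub hmn]
        push_cast
        ring
      rw [hTcardR] at hsum
      linarith
    intro i i' hie hi'e
    exact key _ i i' hie hi'e
end

section
/- For every subset S of size m, the unbiased MMD statistic satisfies MMD²ᵤ(S) := α(S) + β(S) − 2γ(S) = (mn)^{−1} N(N−1)(W(S) − k̄), where W(S) = mα(S)/N + nβ(S)/N; in particular MMD²ᵤ is an increasing affine function of W, so the test statistic Z_W is equivalent to the MMD permutation test. -/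
open Finset Matrix Asymptotics

lemma mmd_aux (x y a b g : ℝ) (hx : x ≠ 0) (hy : y ≠ 0) (hx1 : x - 1 ≠ 0)
    (hy1 : y - 1 ≠ 0) (hxy : x + y ≠ 0) (hxy1 : x + y - 1 ≠ 0) :
    (x * (x - 1))⁻¹ * a + (y * (y - 1))⁻¹ * b - 2 * ((x * y)⁻¹ * g)
      = (x * y)⁻¹ * ((x + y) * (x + y - 1)) *
        (x * ((x * (x - 1))⁻¹ * a) / (x + y) + y * ((y * (y - 1))⁻¹ * b) / (x + y)
          - ((x + y) * (x + y - 1))⁻¹ * (a + b + 2 * g)) := by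
  field_simp
  ring

/-- `MMD²ᵤ(S) = α(S) + β(S) − 2γ(S) = (mn)⁻¹ N(N−1)(W(S) − k̄)`, an increasing
affine function of `W(S)` (the coefficient is positive). -/
theorem mmd_affine_in_W (m n : ℕ) (hm : 2 ≤ m) (hn : 2 ≤ n)
    (k : Fin (m + n) → Fin (m + n) → ℝ) (hsym : ∀ i j, k i j = k j i)
    (S : Finset (Fin (m + n))) (hS : S.card = m) :
    alphaStat (m + n) m k S + betaStat (m + n) n k S - 2 * gammaStat (m + n) m n k S
      = ((m : ℝ) * (n : ℝ))⁻¹ * (((m : ℝ) + (n : ℝ)) * (((m : ℝ) + (n : ℝ)) - 1)) * (Wstat (m + n) m n k S - kbar (m + n) k) ∧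
    0 < ((m : ℝ) * (n : ℝ))⁻¹ * (((m : ℝ) + (n : ℝ)) * (((m : ℝ) + (n : ℝ)) - 1)) := by

  have hm0 : (0:ℝ) < m := by exact_mod_cast Nat.lt_of_lt_of_le two_pos hm
  have hn0 : (0:ℝ) < n := by exact_mod_cast Nat.lt_of_lt_of_le two_pos hn
  have hm1 : (0:ℝ) < (m:ℝ) - 1 := by
    have : (2:ℝ) ≤ m := by exact_mod_cast hm
    linarith
  have hn1 : (0:ℝ) < (n:ℝ) - 1 := by
    have : (2:ℝ) ≤ n := by exact_mod_cast hn
    linarith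
  have hN1 : (0:ℝ) < (m:ℝ) + n - 1 := by linarith
  set A := ∑ i ∈ S, ∑ j ∈ S.erase i, k i j with hA
  set B := ∑ i ∈ Sᶜ, ∑ j ∈ Sᶜ.erase i, k i j with hB
  set G := ∑ i ∈ S, ∑ j ∈ Sᶜ, k i j with hG
  have hsplit : ∑ i : Fin (m + n), ∑ j ∈ (Finset.univ : Finset (Fin (m+n))).erase i, k i j
      = A + B + 2 * G := by
    have huniv : ∀ x : Fin (m+n), x ∈ S ∪ Sᶜ := by
      intro x; simp [Finset.mem_union, Finset.mem_compl, em]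
    rw [show (Finset.univ : Finset (Fin (m+n))) = S ∪ Sᶜ from
      (Finset.eq_univ_iff_forall.mpr huniv).symm,
      Finset.sum_union (disjoint_compl_right)]
    have h1 : ∀ i ∈ S, ∑ j ∈ ((S ∪ Sᶜ) : Finset (Fin (m+n))).erase i, k i j
        = (∑ j ∈ S.erase i, k i j) + ∑ j ∈ Sᶜ, k i j := by
      intro i hi
      have : ((S ∪ Sᶜ) : Finset (Fin (m+n))).erase i = S.erase i ∪ Sᶜ := by
        ext x
        simp only [Finset.mem_erase, Finset.mem_union, Finset.mem_compl]
        constructor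
        · rintro ⟨hx, h⟩; tauto
        · rintro (⟨hx, h⟩ | h)
          · exact ⟨hx, Or.inl h⟩
          · exact ⟨fun hxi => h (hxi ▸ hi), Or.inr h⟩
      rw [this, Finset.sum_union]
      exact Finset.disjoint_left.mpr (fun x hx hx2 =>
        (Finset.mem_compl.mp hx2) (Finset.mem_of_mem_erase hx))
    have h2 : ∀ i ∈ Sᶜ, ∑ j ∈ ((S ∪ Sᶜ) : Finset (Fin (m+n))).erase i, k i j
        = (∑ j ∈ S, k i j) + ∑ j ∈ Sᶜ.erase i, k i j := by
      intro i hi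
      have : ((S ∪ Sᶜ) : Finset (Fin (m+n))).erase i = S ∪ Sᶜ.erase i := by
        ext x
        simp only [Finset.mem_erase, Finset.mem_union, Finset.mem_compl]
        constructor
        · rintro ⟨hx, h⟩
          rcases h with h | h
          · exact Or.inl h
          · exact Or.inr ⟨hx, h⟩
        · rintro (h | ⟨hx, h⟩)
          · refine ⟨fun hxi => ?_, Or.inl h⟩
            exact (Finset.mem_compl.mp hi) (hxi ▸ h)
          · exact ⟨hx, Or.inr h⟩
      rw [this, Finset.sum_union]
      exact Finset.disjoint_left.mpr (fun x hx hx2 =>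
        (Finset.mem_compl.mp (Finset.mem_of_mem_erase hx2)) hx)
    rw [Finset.sum_congr rfl h1, Finset.sum_congr rfl h2, Finset.sum_add_distrib,
      Finset.sum_add_distrib]
    have hGG : ∑ i ∈ Sᶜ, ∑ j ∈ S, k i j = G := by
      rw [Finset.sum_comm]
      exact Finset.sum_congr rfl fun i _ => Finset.sum_congr rfl fun j _ => hsym j i
    rw [hGG]
    ring
  constructor
  · unfold alphaStat betaStat gammaStat Wstat kbar
    rw [← hA, ← hB, ← hG, hsplit]
    push_cast
    exact mmd_aux (m:ℝ) (n:ℝ) A B G (ne_of_gt hm0) (ne_of_gt hn0)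
      (ne_of_gt hm1) (ne_of_gt hn1) (by positivity) (ne_of_gt hN1)
  · have : (0:ℝ) < ((m:ℝ) + n) * ((m:ℝ) + n - 1) := by positivity
    positivity
end
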